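/- arXiv:2501.02240 — 10 statements merged into one kernel-verified Lean document; each statement's English description precedes it below -/
import Mathlib

section
/- Let d ≥ 1, let F : ℝ^d → ℂ be Lebesgue integrable, let ξ ∈ ℝ^d, and let s ∈ ℂ with Re s > 0. Then the function (t, x) ↦ e^{−i ξ·x − s t} t^{−d} F(x/t) is integrable on (0, ∞) × ℝ^d, and ∫₀^∞ ∫_{ℝ^d} e^{−i ξ·x − s t} t^{−d} F(x/t) dx dt = ∫_{ℝ^d} F(y) / (s + i ξ·y) dy. -/
/-!
For fixed `t > 0` the substitution `x = t y` turns the inner integral into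
`∫ e^{-(s + i ξ·y) t} F(y) dy`, whose integrand is dominated by `e^{-t Re s} |F(y)|`, integrable
on `(0, ∞) × ℝ^d`. Fubini then exchanges the two integrals, and `∫₀^∞ e^{-z t} dt = 1/z` for
`Re z > 0`. The same substitution applied to absolute values gives integrability of the original
integrand; its measurability rests on `(t, x) ↦ x / t` pulling null sets back to null sets.
-/

open MeasureTheory Set Complex Module
open scoped InnerProductSpace

theorem integral_cexp_neg_mul_Ioi {z : ℂ} (hz : 0 < z.re) :
    ∫ t in Ioi (0 : ℝ), cexp (-z * t) = z⁻¹ := by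
  simpa [div_neg, neg_div] using integral_exp_mul_complex_Ioi (a := -z) (by simpa) 0

theorem norm_cexp_neg_add_I_mul_mul (s : ℂ) (c t : ℝ) :
    ‖cexp (-(s + I * c) * t)‖ = Real.exp (-s.re * t) := by
  simp [Complex.norm_exp, Complex.mul_re]

section HaarScaling

variable {E : Type*} [NormedAddCommGroup E] [NormedSpace ℝ E] [FiniteDimensional ℝ E]
  [MeasurableSpace E] [BorelSpace E] (μ : Measure E) [μ.IsAddHaarMeasure]

theorem integral_inv_pow_smul_comp_inv_smul {G : Type*} [NormedAddCommGroup G] [NormedSpace ℝ G]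
    (g : E → G) {t : ℝ} (ht : 0 < t) :
    ∫ x, (t ^ finrank ℝ E)⁻¹ • g (t⁻¹ • x) ∂μ = ∫ y, g y ∂μ := by
  rw [integral_smul, Measure.integral_comp_inv_smul_of_nonneg μ g ht.le,
    inv_smul_smul₀ (pow_pos ht _).ne']

theorem quasiMeasurePreserving_inv_smul (ν : Measure ℝ) [SFinite ν] (hν : ∀ᵐ t ∂ν, t ≠ 0) :
    Measure.QuasiMeasurePreserving (fun p : ℝ × E => p.1⁻¹ • p.2) (ν.prod μ) μ := by
  have hmeas : Measurable (fun p : ℝ × E => p.1⁻¹ • p.2) := by fun_prop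
  refine ⟨hmeas, Measure.AbsolutelyContinuous.mk fun A hA hA0 => ?_⟩
  rw [Measure.map_apply hmeas hA, Measure.prod_apply (hmeas hA)]
  refine lintegral_eq_zero_of_ae_eq_zero ?_
  filter_upwards [hν] with t ht
  change μ ((t⁻¹ • ·) ⁻¹' A) = 0
  rw [Measure.addHaar_preimage_smul μ (inv_ne_zero ht), hA0, mul_zero]

end HaarScaling

section SelfSimilar

variable {E : Type*} [NormedAddCommGroup E] [InnerProductSpace ℝ E] (ξ : E) (s : ℂ)

noncomputable def fourierLaplaceIntegrand (F : E → ℂ) (t : ℝ) (x : E) : ℂ :=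
  cexp (-(I * ⟪ξ, x⟫_ℝ) - s * t) * ((t : ℂ) ^ finrank ℝ E)⁻¹ * F (t⁻¹ • x)

variable {F : E → ℂ}

theorem fourierLaplaceIntegrand_eq_smul {t : ℝ} (ht : t ≠ 0) (x : E) :
    fourierLaplaceIntegrand ξ s F t x =
      (t ^ finrank ℝ E)⁻¹ • (cexp (-(s + I * ⟪ξ, t⁻¹ • x⟫_ℝ) * t) * F (t⁻¹ • x)) := by
  have hexp : -(s + I * ((t⁻¹ * ⟪ξ, x⟫_ℝ : ℝ) : ℂ)) * t = -(I * ⟪ξ, x⟫_ℝ) - s * t := by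
    have ht' : (t : ℂ) ≠ 0 := by exact_mod_cast ht
    push_cast
    field_simp
    ring
  rw [fourierLaplaceIntegrand, real_inner_smul_right, hexp, Complex.real_smul]
  push_cast
  ring

variable [FiniteDimensional ℝ E] [MeasurableSpace E] [BorelSpace E] (μ : Measure E)

theorem integrable_cexp_neg_mul_mul_prod [SFinite μ] (hF : Integrable F μ) (hs : 0 < s.re) :
    Integrable (fun p : ℝ × E => cexp (-(s + I * ⟪ξ, p.2⟫_ℝ) * p.1) * F p.2)
      ((volume.restrict (Ioi 0)).prod μ) := by
  refine ((exp_neg_integrableOn_Ioi 0 hs).mul_prod hF.norm).mono' ?_ ?_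
  · exact (Continuous.aestronglyMeasurable (by fun_prop)).mul hF.aestronglyMeasurable.comp_snd
  · filter_upwards with p
    rw [norm_mul, norm_cexp_neg_add_I_mul_mul]

variable [μ.IsAddHaarMeasure]

theorem integral_fourierLaplaceIntegrand {t : ℝ} (ht : 0 < t) :
    ∫ x, fourierLaplaceIntegrand ξ s F t x ∂μ = ∫ y, cexp (-(s + I * ⟪ξ, y⟫_ℝ) * t) * F y ∂μ := by
  simp_rw [fourierLaplaceIntegrand_eq_smul ξ s ht.ne']
  exact integral_inv_pow_smul_comp_inv_smul μ (fun y => cexp (-(s + I * ⟪ξ, y⟫_ℝ) * t) * F y) ht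

theorem integrable_fourierLaplaceIntegrand (hF : Integrable F μ) (hs : 0 < s.re) :
    Integrable (Function.uncurry (fourierLaplaceIntegrand ξ s F))
      ((volume.restrict (Ioi 0)).prod μ) := by
  have hK := integrable_cexp_neg_mul_mul_prod ξ s μ hF hs
  have hqmp := quasiMeasurePreserving_inv_smul μ (volume.restrict (Ioi 0))
    (ae_restrict_of_forall_mem measurableSet_Ioi fun _ ht => ht.ne')
  have hmeas : AEStronglyMeasurable (Function.uncurry (fourierLaplaceIntegrand ξ s F))
      ((volume.restrict (Ioi 0)).prod μ) :=
    (Measurable.aestronglyMeasurable (by fun_prop)).mul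
      (hF.aestronglyMeasurable.comp_quasiMeasurePreserving hqmp)
  have hslice : ∀ᵐ (t : ℝ) ∂volume.restrict (Ioi 0),
      Integrable (fourierLaplaceIntegrand ξ s F t) μ ∧
      ∫ x, ‖fourierLaplaceIntegrand ξ s F t x‖ ∂μ =
        ∫ y, ‖cexp (-(s + I * ⟪ξ, y⟫_ℝ) * t) * F y‖ ∂μ := by
    filter_upwards [ae_restrict_mem measurableSet_Ioi, hK.prod_right_ae] with t ht hKt
    have hscale : fourierLaplaceIntegrand ξ s F t = fun x =>
        (t ^ finrank ℝ E)⁻¹ • (cexp (-(s + I * ⟪ξ, t⁻¹ • x⟫_ℝ) * t) * F (t⁻¹ • x)) :=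
      funext (fourierLaplaceIntegrand_eq_smul ξ s ht.ne')
    refine ⟨hscale ▸ (hKt.comp_smul (inv_ne_zero ht.ne')).smul (t ^ finrank ℝ E)⁻¹, ?_⟩
    simp_rw [hscale, norm_smul, Real.norm_of_nonneg (inv_nonneg.2 (pow_nonneg ht.le _)),
      ← smul_eq_mul]
    exact integral_inv_pow_smul_comp_inv_smul μ
      (fun y => ‖cexp (-(s + I * ⟪ξ, y⟫_ℝ) * t) * F y‖) ht
  rw [integrable_prod_iff hmeas]
  exact ⟨hslice.mono fun t h => h.1,
    hK.integral_norm_prod_left.congr (hslice.mono fun t h => h.2.symm)⟩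

theorem integral_integral_fourierLaplaceIntegrand (hF : Integrable F μ) (hs : 0 < s.re) :
    ∫ t in Ioi (0 : ℝ), ∫ x, fourierLaplaceIntegrand ξ s F t x ∂μ =
      ∫ y, F y / (s + I * ⟪ξ, y⟫_ℝ) ∂μ := calc
  _ = ∫ t in Ioi (0 : ℝ), ∫ y, cexp (-(s + I * ⟪ξ, y⟫_ℝ) * t) * F y ∂μ :=
    setIntegral_congr_fun measurableSet_Ioi fun _ ht =>
      integral_fourierLaplaceIntegrand ξ s μ ht
  _ = ∫ y, (∫ t in Ioi (0 : ℝ), cexp (-(s + I * ⟪ξ, y⟫_ℝ) * t) * F y) ∂μ :=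
    integral_integral_swap (μ := volume.restrict (Ioi 0)) (ν := μ)
      (integrable_cexp_neg_mul_mul_prod ξ s μ hF hs)
  _ = _ := by
    refine integral_congr_ae (ae_of_all _ fun y => ?_)
    have hre : 0 < (s + I * ⟪ξ, y⟫_ℝ).re := by simpa using hs
    dsimp only
    rw [integral_mul_const, integral_cexp_neg_mul_Ioi hre, inv_mul_eq_div]

end SelfSimilar

theorem stmt2_general (d : ℕ)
    (F : EuclideanSpace ℝ (Fin d) → ℂ) (hF : Integrable F)
    (ξ : EuclideanSpace ℝ (Fin d)) (s : ℂ) (hs : 0 < s.re) :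
    IntegrableOn
      (fun p : ℝ × EuclideanSpace ℝ (Fin d) =>
        Complex.exp (-(Complex.I * ((inner ℝ ξ p.2 : ℝ) : ℂ)) - s * (p.1 : ℂ)) *
          ((p.1 : ℂ) ^ d)⁻¹ * F (p.1⁻¹ • p.2))
      (Ioi (0 : ℝ) ×ˢ univ) ∧
    ∫ t in Ioi (0 : ℝ), ∫ x : EuclideanSpace ℝ (Fin d),
        Complex.exp (-(Complex.I * ((inner ℝ ξ x : ℝ) : ℂ)) - s * (t : ℂ)) *
          ((t : ℂ) ^ d)⁻¹ * F (t⁻¹ • x)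
      = ∫ y : EuclideanSpace ℝ (Fin d), F y / (s + Complex.I * ((inner ℝ ξ y : ℝ) : ℂ)) := by
  have hint := integrable_fourierLaplaceIntegrand ξ s volume hF hs
  rw [IntegrableOn, Measure.volume_eq_prod, ← Measure.prod_restrict, Measure.restrict_univ]
  simpa only [fourierLaplaceIntegrand, Function.uncurry_def, finrank_euclideanSpace_fin] using
    And.intro hint (integral_integral_fourierLaplaceIntegrand ξ s volume hF hs)

/-- The iterated Fourier (in `x`) and Laplace (in `t`) transform of the self-similar
profile `t^{−d} F(x/t)`: the function `(t, x) ↦ e^{−i ξ·x − s t} t^{−d} F(x/t)` is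
integrable on `(0, ∞) × ℝ^d`, and
`∫₀^∞ ∫_{ℝ^d} e^{−i ξ·x − s t} t^{−d} F(x/t) dx dt = ∫_{ℝ^d} F(y)/(s + i ξ·y) dy`. -/
theorem stmt2 (d : ℕ) (hd : 1 ≤ d)
    (F : EuclideanSpace ℝ (Fin d) → ℂ) (hF : Integrable F)
    (ξ : EuclideanSpace ℝ (Fin d)) (s : ℂ) (hs : 0 < s.re) :
    IntegrableOn
      (fun p : ℝ × EuclideanSpace ℝ (Fin d) =>
        Complex.exp (-(Complex.I * ((inner ℝ ξ p.2 : ℝ) : ℂ)) - s * (p.1 : ℂ)) *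
          ((p.1 : ℂ) ^ d)⁻¹ * F (p.1⁻¹ • p.2))
      (Ioi (0 : ℝ) ×ˢ univ) ∧
    ∫ t in Ioi (0 : ℝ), ∫ x : EuclideanSpace ℝ (Fin d),
        Complex.exp (-(Complex.I * ((inner ℝ ξ x : ℝ) : ℂ)) - s * (t : ℂ)) *
          ((t : ℂ) ^ d)⁻¹ * F (t⁻¹ • x)
      = ∫ y : EuclideanSpace ℝ (Fin d), F y / (s + Complex.I * ((inner ℝ ξ y : ℝ) : ℂ)) :=
  stmt2_general d F hF ξ s hs
end

section
/- For every real s > 0 and every ξ ∈ ℝ, the complex-valued integral ∫_{−1}^{1} 1 / (√(1 − y²) · (s + i ξ y)) dy equals π / √(s² + ξ²). -/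
/-!
The substitution `y = sin (arctan t) = t / √(1 + t²)` maps `ℝ` onto `(-1, 1)` and turns the
arcsine weight `dy / √(1 - y²)` into the Cauchy weight `dt / (1 + t²)`. Since `sin ∘ arctan` is
odd, pairing `t` with `-t` replaces `1 / (s + iξy)` by its real part `s / (s² + ξ²y²)`, and the
resulting integrand `s / (s² + (s² + ξ²) t²)` has integral `π / √(s² + ξ²)` over `ℝ`.
-/

open MeasureTheory Set Real

theorem range_sin_arctan : range (fun t => sin (arctan t)) = Ioo (-1) 1 := by
  refine subset_antisymm ?_ fun y hy => ?_
  · rintro _ ⟨t, rfl⟩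
    have hI := Ioo_subset_Icc_self (arctan_mem_Ioo t)
    constructor
    · simpa using strictMonoOn_sin (left_mem_Icc.2 (by linarith [pi_pos])) hI
        (neg_pi_div_two_lt_arctan t)
    · simpa using strictMonoOn_sin hI (right_mem_Icc.2 (by linarith [pi_pos]))
        (arctan_lt_pi_div_two t)
  · exact ⟨y / √(1 - y ^ 2), by simp only [← arcsin_eq_arctan hy, sin_arcsin hy.1.le hy.2.le]⟩

theorem sqrt_one_sub_sin_arctan_sq (t : ℝ) : √(1 - sin (arctan t) ^ 2) = cos (arctan t) := by
  rw [← cos_sq', sqrt_sq (cos_arctan_pos t).le]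

theorem integral_Ioo_inv_sqrt_one_sub_sq_smul {E : Type*} [NormedAddCommGroup E]
    [NormedSpace ℝ E] (f : ℝ → E) :
    ∫ y in Ioo (-1 : ℝ) 1, (√(1 - y ^ 2))⁻¹ • f y
      = ∫ t, (1 + t ^ 2)⁻¹ • f (sin (arctan t)) := by
  rw [← range_sin_arctan, ← image_univ,
    integral_image_eq_integral_abs_deriv_smul MeasurableSet.univ
      (fun t _ => ((hasDerivAt_arctan t).sin).hasDerivWithinAt)
      sin_arctan_strictMono.injective.injOn,
    setIntegral_univ]
  congr 1 with t
  have hcos := cos_arctan_pos t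
  rw [sqrt_one_sub_sin_arctan_sq, smul_smul, abs_of_pos (by positivity)]
  field_simp

theorem integral_div_sq_add_mul_sq {a c : ℝ} (ha : 0 < a) (hc : 0 < c) :
    ∫ t, a / (a ^ 2 + c * t ^ 2) = π / √c := by
  have hsc : 0 < √c := sqrt_pos.2 hc
  have hrw : ∀ t, a / (a ^ 2 + c * t ^ 2) = a⁻¹ * (1 + (√c / a * t) ^ 2)⁻¹ := fun t => by
    rw [mul_pow, div_pow, sq_sqrt hc.le]
    field_simp
  simp_rw [hrw]
  rw [Measure.integral_comp_mul_left (fun u => a⁻¹ * (1 + u ^ 2)⁻¹), integral_const_mul,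
    integral_univ_inv_one_add_sq, abs_of_pos (by positivity), smul_eq_mul]
  field_simp

theorem integral_add_comp_neg {E : Type*} [NormedAddCommGroup E] [NormedSpace ℝ E]
    {f : ℝ → E} (hf : Integrable f) : ∫ x, (f x + f (-x)) = 2 • ∫ x, f x := by
  rw [integral_add hf hf.comp_neg, integral_neg_eq_self, two_nsmul]

theorem norm_inv_le_inv_abs_re {z : ℂ} (hz : z.re ≠ 0) : ‖z⁻¹‖ ≤ |z.re|⁻¹ := by
  rw [norm_inv]
  exact inv_anti₀ (abs_pos.2 hz) (Complex.abs_re_le_norm z)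

theorem inv_add_inv_neg (s ξ y : ℝ) :
    ((s : ℂ) + Complex.I * ξ * y)⁻¹ + ((s : ℂ) + Complex.I * ξ * (-y : ℝ))⁻¹
      = ((2 * s / (s ^ 2 + ξ ^ 2 * y ^ 2) : ℝ) : ℂ) := by
  set z : ℂ := s + Complex.I * ξ * y
  have hconj : (starRingEnd ℂ) z = s + Complex.I * ξ * (-y : ℝ) := by
    apply Complex.ext <;> simp [z]
  rw [← hconj, ← map_inv₀, Complex.add_conj, Complex.inv_re]
  simp [z, Complex.normSq_apply]
  ring

theorem inv_one_add_sq_smul_resolvent_add_neg (s ξ t : ℝ) :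
    (1 + t ^ 2)⁻¹ • ((s : ℂ) + Complex.I * ξ * (sin (arctan t) : ℝ))⁻¹
      + (1 + (-t) ^ 2)⁻¹ • ((s : ℂ) + Complex.I * ξ * (sin (arctan (-t)) : ℝ))⁻¹
      = ((2 * (s / (s ^ 2 + (s ^ 2 + ξ ^ 2) * t ^ 2)) : ℝ) : ℂ) := by
  rw [neg_sq, arctan_neg, sin_neg, ← smul_add, inv_add_inv_neg s ξ, sin_sq_arctan,
    Complex.real_smul, ← Complex.ofReal_mul]
  congr 1
  field_simp
  ring

section Resolvent

variable {s : ℝ} (ξ : ℝ)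

theorem ofReal_add_I_mul_ne_zero (hs : s ≠ 0) (y : ℝ) : (s : ℂ) + Complex.I * ξ * y ≠ 0 :=
  fun h => hs (by simpa using congrArg Complex.re h)

theorem norm_inv_ofReal_add_I_mul_le (hs : s ≠ 0) (y : ℝ) :
    ‖((s : ℂ) + Complex.I * ξ * y)⁻¹‖ ≤ |s|⁻¹ := by
  have hre : ((s : ℂ) + Complex.I * ξ * y).re = s := by simp
  have h := norm_inv_le_inv_abs_re (z := (s : ℂ) + Complex.I * ξ * y) (by rwa [hre])
  rwa [hre] at h

theorem integrable_inv_one_add_sq_smul_resolvent (hs : s ≠ 0) :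
    Integrable fun t : ℝ =>
      (1 + t ^ 2)⁻¹ • ((s : ℂ) + Complex.I * ξ * (sin (arctan t) : ℝ))⁻¹ := by
  refine (integrable_inv_one_add_sq.mul_const |s|⁻¹).mono' ?_ (.of_forall fun t => ?_)
  · have hden : Continuous fun t : ℝ => (s : ℂ) + Complex.I * ξ * (sin (arctan t) : ℝ) := by
      fun_prop
    have hweight : Continuous fun t : ℝ => (1 + t ^ 2)⁻¹ :=
      (continuous_const.add (continuous_pow 2)).inv₀ fun t => (add_pos_of_pos_of_nonneg one_pos
        (sq_nonneg t)).ne'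
    exact (hweight.smul (hden.inv₀ fun t => ofReal_add_I_mul_ne_zero ξ hs _)).aestronglyMeasurable
  · rw [norm_smul, norm_inv, Real.norm_of_nonneg (by positivity)]
    gcongr
    exact norm_inv_ofReal_add_I_mul_le ξ hs _

theorem integral_inv_one_add_sq_smul_resolvent (hs : 0 < s) :
    ∫ t : ℝ, (1 + t ^ 2)⁻¹ • ((s : ℂ) + Complex.I * ξ * (sin (arctan t) : ℝ))⁻¹
      = ((π / √(s ^ 2 + ξ ^ 2) : ℝ) : ℂ) := by
  have htwice := integral_add_comp_neg (integrable_inv_one_add_sq_smul_resolvent ξ hs.ne')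
  simp only [inv_one_add_sq_smul_resolvent_add_neg, integral_complex_ofReal,
    integral_const_mul, integral_div_sq_add_mul_sq hs (by positivity : 0 < s ^ 2 + ξ ^ 2),
    nsmul_eq_mul, Complex.ofReal_mul] at htwice
  exact mul_left_cancel₀ two_ne_zero htwice.symm

end Resolvent

/-- For `s > 0` and `ξ ∈ ℝ`,
`∫_{−1}^{1} 1/(√(1 − y²) (s + i ξ y)) dy = π/√(s² + ξ²)`. -/
theorem stmt5 (s ξ : ℝ) (hs : 0 < s) :
    ∫ y in Ioo (-1 : ℝ) 1,
        1 / (((Real.sqrt (1 - y ^ 2) : ℝ) : ℂ) * ((s : ℂ) + Complex.I * (ξ : ℂ) * (y : ℂ)))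
      = ((Real.pi / Real.sqrt (s ^ 2 + ξ ^ 2) : ℝ) : ℂ) := by
  have hsmul : ∀ y : ℝ, 1 / ((√(1 - y ^ 2) : ℂ) * ((s : ℂ) + Complex.I * ξ * y))
      = (√(1 - y ^ 2))⁻¹ • ((s : ℂ) + Complex.I * ξ * y)⁻¹ := fun y => by
    rw [Complex.real_smul, Complex.ofReal_inv, one_div, mul_inv]
  simp_rw [hsmul]
  rw [integral_Ioo_inv_sqrt_one_sub_sq_smul (fun y : ℝ => ((s : ℂ) + Complex.I * ξ * y)⁻¹),
    integral_inv_one_add_sq_smul_resolvent ξ hs]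
end

section
/- Let ρ_in : ℝ → ℝ be Lebesgue integrable and for t > 0 define ρ(x, t) = (1/(π t)) ∫_{−t}^{t} ρ_in(x − y) (1 − (y/t)²)^{−1/2} dy. Then for every real s > 0 and ξ ∈ ℝ, ∫₀^∞ ∫_ℝ e^{−s t − i ξ x} ρ(x, t) dx dt = ρ̂_in(ξ) / √(s² + ξ²), where ρ̂_in(ξ) = ∫_ℝ e^{−i ξ x} ρ_in(x) dx. -/
/-!
Substituting `y = t sin θ` writes `ρ(·, t)` as the average
`π⁻¹ ∫_{-π/2}^{π/2} ρ_in(· - t sin θ) dθ` of translates of `ρ_in`, so its Fourier transform is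
`ρ̂_in(ξ) π⁻¹ ∫ e^{-iξ t sin θ} dθ`. Exchanging the `t`- and `θ`-integrals, the Laplace transform
becomes `ρ̂_in(ξ) π⁻¹ ∫ dθ / (s + iξ sin θ)`. The imaginary part of the integrand is odd in `θ`,
and the real part `s / (s² + ξ² sin² θ)` integrates to `π / √(s² + ξ²)` after `θ = arctan v`.
-/

open MeasureTheory Set Real
open Complex (I)
open scoped Complex

theorem image_mul_sin_Ioo {t : ℝ} (ht : 0 < t) :
    (fun θ => t * Real.sin θ) '' Ioo (-(π / 2)) (π / 2) = Ioo (-t) t := by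
  have : Real.sin '' Ioo (-(π / 2)) (π / 2) = Ioo (-1) 1 :=
    sinPartialHomeomorph.image_source_eq_target
  rw [← image_image (t * ·), this, image_mul_left_Ioo ht, mul_neg_one, mul_one]

theorem integral_Ioo_mul_inv_sqrt_one_sub_div_sq {t : ℝ} (ht : 0 < t) (g : ℝ → ℝ) :
    ∫ y in Ioo (-t) t, g y * (√(1 - (y / t) ^ 2))⁻¹
      = t * ∫ θ in Ioo (-(π / 2)) (π / 2), g (t * Real.sin θ) := by
  have hinj : InjOn (fun θ => t * Real.sin θ) (Ioo (-(π / 2)) (π / 2)) :=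
    ((mul_right_injective₀ ht.ne').comp_injOn (injOn_sin.mono Ioo_subset_Icc_self))
  rw [← image_mul_sin_Ioo ht, integral_image_eq_integral_abs_deriv_smul measurableSet_Ioo
    (fun θ _ => ((hasDerivAt_sin θ).const_mul t).hasDerivWithinAt) hinj, ← integral_const_mul]
  refine setIntegral_congr_fun measurableSet_Ioo fun θ hθ => ?_
  have hcos : 0 < Real.cos θ := cos_pos_of_mem_Ioo hθ
  have hsqrt : √(1 - (t * Real.sin θ / t) ^ 2) = Real.cos θ := by
    rw [mul_div_cancel_left₀ _ ht.ne', ← cos_sq', sqrt_sq hcos.le]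
  rw [hsqrt, smul_eq_mul, abs_of_pos (mul_pos ht hcos)]
  field_simp

section

variable {α : Type*} [MeasurableSpace α] {μ : Measure α}

theorem measurePreserving_sub_shear [SFinite μ] {c : α → ℝ} (hc : Measurable c) :
    MeasurePreserving (fun p : α × ℝ => (p.1, p.2 - c p.1)) (μ.prod volume) (μ.prod volume) :=
  (MeasurePreserving.id μ).skew_product (by fun_prop)
    (ae_of_all _ fun a => (measurePreserving_sub_right volume (c a)).map_eq)

theorem norm_exp_neg_I_mul (ξ x : ℝ) : ‖cexp (-(I * ξ * x))‖ = 1 := by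
  rw [Complex.norm_exp]; simp

theorem integral_exp_neg_I_mul_mul_sub (f : ℝ → ℂ) (ξ c : ℝ) :
    ∫ x : ℝ, cexp (-(I * ξ * x)) * f (x - c)
      = cexp (-(I * ξ * c)) * ∫ x : ℝ, cexp (-(I * ξ * x)) * f x := by
  rw [← integral_sub_right_eq_self (fun x : ℝ => cexp (-(I * ξ * x)) * f x) c,
    ← integral_const_mul]
  congr 1 with x
  rw [← mul_assoc, ← Complex.exp_add]
  congr 2
  push_cast
  ring

theorem integral_exp_neg_I_mul_mul_integral_sub [IsFiniteMeasure μ] {f : ℝ → ℂ}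
    (hf : Integrable f) {c : α → ℝ} (hc : Measurable c) (ξ : ℝ) :
    ∫ x : ℝ, cexp (-(I * ξ * x)) * ∫ a, f (x - c a) ∂μ
      = (∫ x : ℝ, cexp (-(I * ξ * x)) * f x) * ∫ a, cexp (-(I * ξ * c a)) ∂μ := by
  have hsheared : Integrable
      (fun p : α × ℝ => cexp (-(I * ξ * ((p.2 + c p.1 : ℝ) : ℂ))) * f p.2) (μ.prod volume) :=
    (hf.comp_snd μ).bdd_mul (by fun_prop) (ae_of_all _ fun p => (norm_exp_neg_I_mul _ _).le)
  have hint : Integrable (fun p : α × ℝ => cexp (-(I * ξ * p.2)) * f (p.2 - c p.1))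
      (μ.prod volume) := by
    simpa [Function.comp_def] using
      (measurePreserving_sub_shear hc).integrable_comp_of_integrable hsheared
  conv_lhs => simp only [← integral_const_mul]
  rw [← integral_integral_swap (f := fun a (x : ℝ) => cexp (-(I * ξ * x)) * f (x - c a)) hint]
  simp_rw [integral_exp_neg_I_mul_mul_sub, integral_mul_const, mul_comm]

theorem integral_Ioi_exp_neg_mul {c : ℂ} (hc : 0 < c.re) :
    ∫ t in Ioi (0 : ℝ), cexp (-(c * t)) = c⁻¹ := by
  have := integral_exp_mul_complex_Ioi (a := -c) (by simpa using hc) 0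
  simp only [neg_mul, Complex.ofReal_zero, mul_zero, Complex.exp_zero] at this
  rw [this, neg_div_neg_eq, one_div]

theorem integral_Ioi_integral_exp_neg_mul [IsFiniteMeasure μ] {c : α → ℂ} (hc : Measurable c)
    {s : ℝ} (hs : 0 < s) (hsc : ∀ a, s ≤ (c a).re) :
    ∫ t in Ioi (0 : ℝ), ∫ a, cexp (-(c a * t)) ∂μ = ∫ a, (c a)⁻¹ ∂μ := by
  have hbound : ∀ᵐ p ∂(volume.restrict (Ioi (0 : ℝ))).prod μ,
      ‖cexp (-(c p.2 * p.1))‖ ≤ Real.exp (-s * p.1) * 1 := by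
    filter_upwards [Measure.quasiMeasurePreserving_fst.ae (ae_restrict_mem measurableSet_Ioi)]
      with p (hp : 0 < p.1)
    rw [Complex.norm_exp, mul_one, Real.exp_le_exp]
    rw [Complex.neg_re, Complex.re_mul_ofReal, neg_mul, neg_le_neg_iff]
    exact mul_le_mul_of_nonneg_right (hsc p.2) hp.le
  have hint : Integrable (fun p : ℝ × α => cexp (-(c p.2 * p.1)))
      ((volume.restrict (Ioi (0 : ℝ))).prod μ) :=
    ((exp_neg_integrableOn_Ioi 0 hs).mul_prod (integrable_const (1 : ℝ))).mono'
      (by fun_prop) hbound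
  rw [integral_integral_swap (f := fun (t : ℝ) a => cexp (-(c a * t))) hint]
  refine integral_congr_ae (ae_of_all _ fun a => integral_Ioi_exp_neg_mul ?_)
  exact hs.trans_le (hsc a)

end

theorem setIntegral_Ioo_neg_self_eq_zero_of_odd {E : Type*} [NormedAddCommGroup E]
    [NormedSpace ℝ E] {f : ℝ → E} (hf : f.Odd) {a : ℝ} (ha : 0 ≤ a) :
    ∫ x in Ioo (-a) a, f x = 0 := by
  rw [← integral_Ioc_eq_integral_Ioo, ← intervalIntegral.integral_of_le (by linarith)]
  have h := intervalIntegral.integral_comp_neg (a := -a) (b := a) f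
  simp only [neg_neg, hf _, intervalIntegral.integral_neg] at h
  have h2 : (2 : ℝ) • ∫ x in -a..a, f x = 0 := by
    rw [two_smul]
    nth_rw 1 [← h]
    exact neg_add_cancel _
  exact (smul_eq_zero.1 h2).resolve_left two_ne_zero

theorem integral_div_add_mul_sin_sq {s : ℝ} (hs : 0 < s) (ξ : ℝ) :
    ∫ θ in Ioo (-(π / 2)) (π / 2), s / (s ^ 2 + ξ ^ 2 * Real.sin θ ^ 2)
      = π / √(s ^ 2 + ξ ^ 2) := by
  set r := √(s ^ 2 + ξ ^ 2)
  have hr : 0 < r := sqrt_pos.2 (by positivity)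
  have hr2 : r ^ 2 = s ^ 2 + ξ ^ 2 := sq_sqrt (by positivity)
  have hsubst : ∀ v : ℝ, |(1 + v ^ 2)⁻¹| • (s / (s ^ 2 + ξ ^ 2 * Real.sin (arctan v) ^ 2))
      = s⁻¹ * (1 + (r / s * v) ^ 2)⁻¹ := by
    intro v
    have hv : 0 < 1 + v ^ 2 := by positivity
    rw [sin_arctan, div_pow, sq_sqrt hv.le, abs_of_pos (inv_pos.2 hv), smul_eq_mul]
    field_simp
    linear_combination v ^ 2 * hr2
  rw [← range_arctan, ← image_univ, integral_image_eq_integral_abs_deriv_smul MeasurableSet.univ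
      (fun v _ => (hasDerivAt_arctan' v).hasDerivWithinAt) arctan_injective.injOn,
    Measure.restrict_univ]
  simp_rw [hsubst]
  rw [integral_const_mul, Measure.integral_comp_mul_left (fun y => (1 + y ^ 2)⁻¹),
    integral_univ_inv_one_add_sq, abs_of_pos (by positivity), smul_eq_mul]
  field_simp

theorem inv_ofReal_add_I_mul_ofReal (a b : ℝ) :
    ((a : ℂ) + I * b)⁻¹
      = ((a / (a ^ 2 + b ^ 2) : ℝ) : ℂ) - I * ((b / (a ^ 2 + b ^ 2) : ℝ) : ℂ) := by
  rw [mul_comm I _]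
  apply Complex.ext <;>
    simp only [Complex.inv_re, Complex.inv_im, Complex.normSq_add_mul_I, Complex.add_re,
      Complex.add_im, Complex.sub_re, Complex.sub_im, Complex.mul_re, Complex.mul_im,
      Complex.I_re, Complex.I_im, Complex.ofReal_re, Complex.ofReal_im] <;> ring

theorem integral_inv_add_I_mul_sin {s : ℝ} (hs : 0 < s) (ξ : ℝ) :
    ∫ θ in Ioo (-(π / 2)) (π / 2), ((s : ℂ) + I * ξ * Real.sin θ)⁻¹
      = ((π / √(s ^ 2 + ξ ^ 2) : ℝ) : ℂ) := by
  set d : ℝ → ℝ := fun θ => s ^ 2 + (ξ * Real.sin θ) ^ 2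
  have hd : ∀ θ, d θ ≠ 0 := fun θ => by positivity
  have hcont : ∀ {g : ℝ → ℝ}, Continuous g →
      IntegrableOn (fun θ => ((g θ / d θ : ℝ) : ℂ)) (Ioo (-(π / 2)) (π / 2)) := fun hg =>
    ((hg.div (by fun_prop) hd).integrableOn_Icc.mono_set Ioo_subset_Icc_self).ofReal
  have hodd : Function.Odd fun θ => ξ * Real.sin θ / d θ := fun θ => by
    simp only [d, Real.sin_neg]; ring
  have hre : ∀ θ, s / d θ = s / (s ^ 2 + ξ ^ 2 * Real.sin θ ^ 2) := fun θ => by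
    simp only [d]; ring
  simp_rw [mul_assoc I, ← Complex.ofReal_mul, inv_ofReal_add_I_mul_ofReal]
  rw [integral_sub (hcont continuous_const) ((hcont (by fun_prop)).const_mul I),
    integral_const_mul, integral_complex_ofReal, integral_complex_ofReal,
    setIntegral_Ioo_neg_self_eq_zero_of_odd hodd (by positivity)]
  simp_rw [hre]
  rw [integral_div_add_mul_sin_sq hs ξ]
  simp

theorem integral_exp_mul_arcsine_mean {f : ℝ → ℝ} (hf : Integrable f) (s ξ : ℝ) {t : ℝ}
    (ht : 0 < t) :
    ∫ x : ℝ, cexp (-(s : ℂ) * t - I * ξ * x) *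
        (((1 / (π * t)) * ∫ y in Ioo (-t) t, f (x - y) * (√(1 - (y / t) ^ 2))⁻¹ : ℝ) : ℂ)
      = (∫ x : ℝ, cexp (-(I * ξ * x)) * f x) / π *
          ∫ θ in Ioo (-(π / 2)) (π / 2), cexp (-((s + I * ξ * Real.sin θ) * t)) := by
  have hmean : ∀ x : ℝ,
      (((1 / (π * t)) * ∫ y in Ioo (-t) t, f (x - y) * (√(1 - (y / t) ^ 2))⁻¹ : ℝ) : ℂ)
        = (π : ℂ)⁻¹ * ∫ θ in Ioo (-(π / 2)) (π / 2), (f (x - t * Real.sin θ) : ℂ) := by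
    intro x
    rw [integral_Ioo_mul_inv_sqrt_one_sub_div_sq ht (fun y => f (x - y)), one_div, mul_inv,
      mul_assoc, inv_mul_cancel_left₀ ht.ne', Complex.ofReal_mul, Complex.ofReal_inv,
      integral_complex_ofReal]
  have hexp : ∀ x : ℝ, cexp (-(s : ℂ) * t - I * ξ * x)
      = cexp (-(s * t)) * cexp (-(I * ξ * x)) := fun x => by
    rw [← Complex.exp_add]; ring_nf
  have hexp' : ∀ θ : ℝ, cexp (-((s + I * ξ * Real.sin θ) * t))
      = cexp (-(s * t)) * cexp (-(I * ξ * ((t * Real.sin θ : ℝ) : ℂ))) := fun θ => by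
    rw [← Complex.exp_add]; push_cast; ring_nf
  simp_rw [hmean, hexp, hexp']
  rw [integral_const_mul]
  calc ∫ x : ℝ, cexp (-(s * t)) * cexp (-(I * ξ * x)) *
        ((π : ℂ)⁻¹ * ∫ θ in Ioo (-(π / 2)) (π / 2), (f (x - t * Real.sin θ) : ℂ))
      = cexp (-(s * t)) * (π : ℂ)⁻¹ * ∫ x : ℝ, cexp (-(I * ξ * x)) *
          ∫ θ in Ioo (-(π / 2)) (π / 2), (f (x - t * Real.sin θ) : ℂ) := by
        rw [← integral_const_mul]; congr 1 with x; ring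
    _ = _ := by
        rw [integral_exp_neg_I_mul_mul_integral_sub (f := fun y => (f y : ℂ)) hf.ofReal
          (c := fun θ => t * Real.sin θ) (by fun_prop)]
        ring

/-- For `ρ(x,t) = (1/(π t)) ∫_{−t}^{t} ρ_in(x − y)(1 − (y/t)²)^{−1/2} dy`, the iterated
Fourier–Laplace transform satisfies
`∫₀^∞ ∫_ℝ e^{−st − iξx} ρ(x,t) dx dt = ρ̂_in(ξ)/√(s² + ξ²)`. -/
theorem stmt7 (ρin : ℝ → ℝ) (hρin : Integrable ρin) (s ξ : ℝ) (hs : 0 < s) :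
    ∫ t in Ioi (0 : ℝ), ∫ x : ℝ,
        Complex.exp (-(s : ℂ) * (t : ℂ) - Complex.I * (ξ : ℂ) * (x : ℂ)) *
          (((1 / (Real.pi * t)) *
            ∫ y in Ioo (-t) t, ρin (x - y) * (Real.sqrt (1 - (y / t) ^ 2))⁻¹ : ℝ) : ℂ)
      = (∫ x : ℝ, Complex.exp (-(Complex.I * (ξ : ℂ) * (x : ℂ))) * ((ρin x : ℝ) : ℂ)) /
          ((Real.sqrt (s ^ 2 + ξ ^ 2) : ℝ) : ℂ) := by
  rw [setIntegral_congr_fun measurableSet_Ioi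
      fun t ht => integral_exp_mul_arcsine_mean hρin s ξ ht, integral_const_mul,
    integral_Ioi_integral_exp_neg_mul (by fun_prop) hs (fun θ => by simp),
    integral_inv_add_I_mul_sin hs ξ]
  have hπ : (π : ℂ) ≠ 0 := Complex.ofReal_ne_zero.2 pi_ne_zero
  push_cast
  field_simp
end

section
/- Let y ∈ (−1, 1) with y ≠ 0. For δ > 0 put z_δ = (y + iδ)^{−2} ∈ ℂ and H_δ = (1 + √(1 − z_δ)) / ((1 + √(1 − z_δ))² − z_δ), where √ denotes the principal complex square root. Then lim_{δ → 0⁺} Im H_δ = −y / (2√(1 − y²)); consequently −(1/(π y)) · lim_{δ → 0⁺} Im H_δ = 1/(2π√(1 − y²)). -/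
/-!
As `δ → 0⁺`, `1 - z_δ` tends to the negative real `1 - 1/y²`, approaching the branch cut of the
principal square root from the side of the sign of `y`, since `Im (1 - z_δ) = 2yδ/|y + iδ|⁴`.
Either way the root tends to `s = i √(1 - y²)/y`, and since `s² = 1 - 1/y²`, `H_δ` tends to
`(1 + s)/((1 + s)² - (1 - s²)) = 1/(2s)`, whose imaginary part is `-y/(2√(1 - y²))`.
-/

open Filter Topology Complex

theorem Complex.tendsto_cpow_const_of_tendsto_log {l : Filter ℂ} {L : ℂ} (w : ℂ)
    (hlog : Tendsto log l (𝓝 L)) (h0 : ∀ᶠ z in l, z ≠ 0) :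
    Tendsto (· ^ w) l (𝓝 (exp (L * w))) :=
  ((continuous_exp.tendsto _).comp (hlog.mul_const w)).congr'
    (h0.mono fun _ hz => (cpow_def_of_ne_zero hz w).symm)

theorem Complex.exp_log_add_mul_I_mul_half {r : ℝ} (hr : 0 < r) (θ : ℝ) :
    exp ((Real.log r + θ * I) * (1 / 2)) = √r * exp (θ / 2 * I) := by
  rw [show ((Real.log r : ℂ) + θ * I) * (1 / 2) = ((Real.log r / 2 : ℝ) : ℂ) + θ / 2 * I by
      push_cast; ring, exp_add, ← ofReal_exp, Real.exp_half, Real.exp_log hr]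

theorem Complex.tendsto_cpow_half_nhdsWithin_im_nonneg {x : ℝ} (hx : x < 0) :
    Tendsto (· ^ (1 / 2 : ℂ)) (𝓝[{z : ℂ | 0 ≤ z.im}] (x : ℂ)) (𝓝 (√(-x) * I)) := by
  have hx0 : (x : ℂ) ≠ 0 := ofReal_ne_zero.2 hx.ne
  have := tendsto_cpow_const_of_tendsto_log (1 / 2)
    (tendsto_log_nhdsWithin_im_nonneg_of_re_neg_of_im_zero (by simpa) (ofReal_im x))
    (eventually_nhdsWithin_of_eventually_nhds (eventually_ne_nhds hx0))
  rwa [norm_real, Real.norm_of_nonpos hx.le, exp_log_add_mul_I_mul_half (neg_pos.2 hx),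
    exp_pi_div_two_mul_I] at this

theorem Complex.tendsto_cpow_half_nhdsWithin_im_neg {x : ℝ} (hx : x < 0) :
    Tendsto (· ^ (1 / 2 : ℂ)) (𝓝[{z : ℂ | z.im < 0}] (x : ℂ)) (𝓝 (-(√(-x) * I))) := by
  have := tendsto_cpow_const_of_tendsto_log (1 / 2)
    (tendsto_log_nhdsWithin_im_neg_of_re_neg_of_im_zero (by simpa) (ofReal_im x))
    (eventually_nhdsWithin_of_forall fun z (hz : z.im < 0) h => by simp [h] at hz)
  rwa [norm_real, Real.norm_of_nonpos hx.le, sub_eq_add_neg, ← neg_mul, ← ofReal_neg,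
    exp_log_add_mul_I_mul_half (neg_pos.2 hx), ofReal_neg, exp_neg_pi_div_two_mul_I,
    mul_neg] at this

theorem Complex.im_one_sub_inv_sq_add_mul_I (y δ : ℝ) :
    (1 - ((y + δ * I) ^ 2)⁻¹).im = 2 * y * δ / normSq ((y + δ * I) ^ 2) := by
  rw [sub_im, one_im, zero_sub, inv_im, neg_div, neg_neg, sq, mul_im]
  simp only [add_re, add_im, mul_re, mul_im, ofReal_re, ofReal_im, I_re, I_im]
  ring

theorem Complex.normSq_sq_add_mul_I_pos (y : ℝ) {δ : ℝ} (hδ : δ ≠ 0) :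
    0 < normSq (((y : ℂ) + δ * I) ^ 2) :=
  normSq_pos.2 <| pow_ne_zero 2 fun h => hδ <| by simpa using congrArg im h

theorem tendsto_inv_sq_add_mul_I {y : ℝ} (hy : y ≠ 0) :
    Tendsto (fun δ : ℝ => (((y : ℂ) + δ * I) ^ 2)⁻¹) (𝓝[>] 0) (𝓝 ((y : ℂ) ^ 2)⁻¹) := by
  have h : Tendsto (fun δ : ℝ => ((y : ℂ) + δ * I) ^ 2) (𝓝 0) (𝓝 ((y : ℂ) ^ 2)) := by
    have hc : Continuous fun δ : ℝ => ((y : ℂ) + δ * I) ^ 2 := by fun_prop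
    simpa using hc.tendsto 0
  exact (h.inv₀ (by simpa)).mono_left nhdsWithin_le_nhds

theorem tendsto_cpow_half_one_sub_inv_sq_add_mul_I {y : ℝ} (hy : y ^ 2 < 1) (hy0 : y ≠ 0) :
    Tendsto (fun δ : ℝ => (1 - (((y : ℂ) + δ * I) ^ 2)⁻¹) ^ (1 / 2 : ℂ)) (𝓝[>] 0)
      (𝓝 ((√(1 - y ^ 2) / y : ℝ) * I)) := by
  set w := fun δ : ℝ => 1 - (((y : ℂ) + δ * I) ^ 2)⁻¹
  set x : ℝ := 1 - (y ^ 2)⁻¹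
  have hx : x < 0 := sub_neg.2 <| (one_lt_inv₀ (by positivity)).2 hy
  have hw : Tendsto w (𝓝[>] 0) (𝓝 (x : ℂ)) := by
    simpa [x] using tendsto_const_nhds.sub (tendsto_inv_sq_add_mul_I hy0)
  have hsqrt : √(-x) = √(1 - y ^ 2) / |y| := by
    rw [show -x = (1 - y ^ 2) / y ^ 2 by simp only [x]; field_simp; ring,
      Real.sqrt_div' _ (sq_nonneg y), Real.sqrt_sq_eq_abs]
  have him (δ : ℝ) : (w δ).im = 2 * y * δ / normSq ((y + δ * I) ^ 2) :=
    im_one_sub_inv_sq_add_mul_I y δ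
  rcases hy0.lt_or_gt with hneg | hpos
  · have hlower : Tendsto w (𝓝[>] 0) (𝓝[{z | z.im < 0}] (x : ℂ)) :=
      tendsto_nhdsWithin_iff.2 ⟨hw, eventually_nhdsWithin_of_forall fun δ (hδ : 0 < δ) => by
        rw [Set.mem_ofPred_eq, him δ]
        exact div_neg_of_neg_of_pos (by nlinarith) (normSq_sq_add_mul_I_pos y hδ.ne')⟩
    rw [show ((√(1 - y ^ 2) / y : ℝ) : ℂ) * I = -(√(-x) * I) by
      rw [hsqrt, abs_of_neg hneg]; push_cast; ring]
    exact (tendsto_cpow_half_nhdsWithin_im_neg hx).comp hlower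
  · have hupper : Tendsto w (𝓝[>] 0) (𝓝[{z | 0 ≤ z.im}] (x : ℂ)) :=
      tendsto_nhdsWithin_iff.2 ⟨hw, eventually_nhdsWithin_of_forall fun δ (hδ : 0 < δ) => by
        rw [Set.mem_ofPred_eq, him δ]
        exact (div_pos (by positivity) (normSq_sq_add_mul_I_pos y hδ.ne')).le⟩
    rw [show √(1 - y ^ 2) / y = √(-x) by rw [hsqrt, abs_of_pos hpos]]
    exact (tendsto_cpow_half_nhdsWithin_im_nonneg hx).comp hupper

theorem tendsto_one_add_div_sq_sub {α : Type*} {l : Filter α} {s z : α → ℂ} {s₀ : ℂ}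
    (hs : Tendsto s l (𝓝 s₀)) (hz : Tendsto z l (𝓝 (1 - s₀ ^ 2))) (hs₀ : s₀ ≠ 0)
    (hs₁ : 1 + s₀ ≠ 0) :
    Tendsto (fun a => (1 + s a) / ((1 + s a) ^ 2 - z a)) l (𝓝 (2 * s₀)⁻¹) := by
  have hden : (1 + s₀) ^ 2 - (1 - s₀ ^ 2) = 2 * s₀ * (1 + s₀) := by ring
  have hs' : Tendsto (fun a => 1 + s a) l (𝓝 (1 + s₀)) := tendsto_const_nhds.add hs
  have h := hs'.div ((hs'.pow 2).sub hz)
    (by rw [hden]; exact mul_ne_zero (mul_ne_zero two_ne_zero hs₀) hs₁)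
  rwa [hden, mul_comm, ← div_div, div_self hs₁, one_div] at h

/-- Sokhotsky–Weierstrass limit of the ballistic symbol inside the light cone:
for `y ∈ (−1,1)`, `y ≠ 0`, with `z_δ = (y + iδ)^{−2}` and
`H_δ = (1 + √(1 − z_δ))/((1 + √(1 − z_δ))² − z_δ)` (principal square root),
`Im H_δ → −y/(2√(1 − y²))` as `δ → 0⁺`, and consequently
`−(1/(π y)) lim Im H_δ = 1/(2π √(1 − y²))`. -/
theorem stmt8 (y : ℝ) (hy : y ∈ Set.Ioo (-1 : ℝ) 1) (hy0 : y ≠ 0) :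
    let z : ℝ → ℂ := fun δ => (((y : ℂ) + (δ : ℂ) * Complex.I) ^ 2)⁻¹
    let H : ℝ → ℂ := fun δ =>
      (1 + (1 - z δ) ^ ((1 : ℂ) / 2)) / ((1 + (1 - z δ) ^ ((1 : ℂ) / 2)) ^ 2 - z δ)
    Tendsto (fun δ => (H δ).im) (nhdsWithin 0 (Set.Ioi 0))
      (nhds (-y / (2 * Real.sqrt (1 - y ^ 2)))) ∧
    Tendsto (fun δ => -(1 / (Real.pi * y)) * (H δ).im) (nhdsWithin 0 (Set.Ioi 0))
      (nhds (1 / (2 * Real.pi * Real.sqrt (1 - y ^ 2)))) := by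
  intro z H
  have hy2 : y ^ 2 < 1 := (sq_lt_one_iff_abs_lt_one y).2 (abs_lt.2 hy)
  have hr : 0 < √(1 - y ^ 2) := Real.sqrt_pos.2 (by linarith)
  set a : ℝ := √(1 - y ^ 2) / y
  have hz : Tendsto z (𝓝[>] 0) (𝓝 (1 - (a * I) ^ 2)) := by
    have ha : a ^ 2 = (1 - y ^ 2) / y ^ 2 := by rw [div_pow, Real.sq_sqrt (by linarith)]
    convert tendsto_inv_sq_add_mul_I hy0 using 2
    rw [mul_pow, I_sq, ← ofReal_pow, ha]
    push_cast
    field_simp [ofReal_ne_zero.2 hy0]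
    ring
  have hH : Tendsto H (𝓝[>] 0) (𝓝 (2 * (a * I))⁻¹) :=
    tendsto_one_add_div_sq_sub (tendsto_cpow_half_one_sub_inv_sq_add_mul_I hy2 hy0) hz
      (mul_ne_zero (ofReal_ne_zero.2 (div_ne_zero hr.ne' hy0)) I_ne_zero)
      fun h => by simpa using congrArg re h
  have hIm : Tendsto (fun δ => (H δ).im) (𝓝[>] 0) (𝓝 (-y / (2 * √(1 - y ^ 2)))) := by
    have hval : ((2 * (a * I))⁻¹).im = -y / (2 * √(1 - y ^ 2)) := by
      simp [a]
      ring
    rw [← hval]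
    exact (continuous_im.tendsto _).comp hH
  refine ⟨hIm, ?_⟩
  convert hIm.const_mul (-(1 / (Real.pi * y))) using 2
  field_simp
end

section
/- Fix s > 0, b ∈ ℝ, γ > 1/2 and μ = 0. Then ν_ε / √ε converges, as ε → 0⁺, to the principal square root of s + i b (the unique square root of s + i b with positive real part), whose real and imaginary parts are (√2/2)(s + √(s² + b²))^{1/2} and (√2/2) b (s + √(s² + b²))^{−1/2} respectively. -/
/-!
Rescale: `u = ν_ε / √ε` solves `u² = δ u + (s + i b)` with `δ = ε^(γ - 1/2) → 0`. If `z` is the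
square root of `s + i b` with `Re z > 0`, then `(u - z)(u + z) = δ u`, and `|u + z| ≥ Re z` because
`Re u > 0`; since `|u|² ≤ δ |u| + |s + i b|` keeps `u` bounded, `|u - z| = O(δ)`.
-/

open Filter Topology

namespace Complex

/-- The half-angle formula for the principal square root of `s + i b`; on the negative real axis
(`b = 0`, `s < 0`) it takes the junk value `0`. -/
noncomputable def principalSqrt (s b : ℝ) : ℂ :=
  ((Real.sqrt 2 / 2 * Real.sqrt (s + Real.sqrt (s ^ 2 + b ^ 2)) : ℝ) : ℂ) +
    I * ((Real.sqrt 2 / 2 * b * (Real.sqrt (s + Real.sqrt (s ^ 2 + b ^ 2)))⁻¹ : ℝ) : ℂ)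

section principalSqrt

variable {s b : ℝ}

theorem principalSqrt_sq (h : 0 < s + Real.sqrt (s ^ 2 + b ^ 2)) :
    principalSqrt s b ^ 2 = s + I * b := by
  rw [principalSqrt]
  set R := Real.sqrt (s ^ 2 + b ^ 2)
  set A := Real.sqrt (s + R)
  have hR : R ^ 2 = s ^ 2 + b ^ 2 := Real.sq_sqrt (by positivity)
  have hA : A ^ 2 = s + R := Real.sq_sqrt h.le
  have hA_pos : 0 < A := Real.sqrt_pos.mpr h
  have h2 : Real.sqrt 2 ^ 2 = 2 := Real.sq_sqrt (by norm_num)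
  apply Complex.ext <;> simp [sq] <;> field_simp
  · linear_combination (2 * (A ^ 2 + R - s)) * hA + 2 * hR + (A ^ 4 - b ^ 2) * h2
  · linear_combination (2 * b) * h2

theorem principalSqrt_re_pos (h : 0 < s + Real.sqrt (s ^ 2 + b ^ 2)) :
    0 < (principalSqrt s b).re := by
  have hre : (principalSqrt s b).re =
      Real.sqrt 2 / 2 * Real.sqrt (s + Real.sqrt (s ^ 2 + b ^ 2)) := by
    simp [principalSqrt]
  rw [hre]
  exact mul_pos (by positivity) (Real.sqrt_pos.mpr h)

end principalSqrt

theorem norm_le_of_sq_eq_mul_add {u w : ℂ} {δ : ℝ} (hδ : 0 ≤ δ) (hu : u ^ 2 = δ * u + w) :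
    ‖u‖ ≤ 1 + δ + ‖w‖ := by
  have h : ‖u‖ ^ 2 ≤ δ * ‖u‖ + ‖w‖ :=
    calc ‖u‖ ^ 2 = ‖(δ : ℂ) * u + w‖ := by rw [← norm_pow, hu]
      _ ≤ δ * ‖u‖ + ‖w‖ := by
        grw [norm_add_le, norm_mul, Complex.norm_of_nonneg hδ]
  nlinarith [norm_nonneg u, norm_nonneg w]

theorem norm_sub_le_of_sq_eq_mul_add {u z : ℂ} {δ : ℝ} (hδ : 0 ≤ δ)
    (hu : u ^ 2 = δ * u + z ^ 2) (hu_re : 0 < u.re) (hz_re : 0 < z.re) :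
    ‖u - z‖ ≤ δ * ‖u‖ / z.re := by
  have huz_re : z.re ≤ ‖u + z‖ :=
    calc z.re ≤ (u + z).re := by rw [add_re]; linarith
      _ ≤ ‖u + z‖ := re_le_norm _
  have huz : u + z ≠ 0 := by
    rintro h
    rw [h, norm_zero] at huz_re
    linarith
  have hfac : u - z = δ * u / (u + z) := by
    rw [eq_div_iff huz]
    linear_combination hu
  rw [hfac, norm_div, norm_mul, Complex.norm_of_nonneg hδ]
  exact div_le_div_of_nonneg_left (by positivity) hz_re huz_re

theorem tendsto_of_sq_eq_mul_add {α : Type*} {l : Filter α} {u : α → ℂ} {δ : α → ℝ} {z : ℂ}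
    (hδ : Tendsto δ l (𝓝 0)) (hδ_nonneg : ∀ᶠ x in l, 0 ≤ δ x)
    (hu : ∀ᶠ x in l, u x ^ 2 = δ x * u x + z ^ 2 ∧ 0 < (u x).re) (hz : 0 < z.re) :
    Tendsto u l (𝓝 z) := by
  rw [tendsto_iff_norm_sub_tendsto_zero]
  have hbound : Tendsto (fun x => δ x * (1 + δ x + ‖z ^ 2‖) / z.re) l (𝓝 0) := by
    simpa using (hδ.mul ((tendsto_const_nhds.add hδ).add tendsto_const_nhds)).div_const z.re
  refine squeeze_zero' (.of_forall fun x => norm_nonneg _) ?_ hbound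
  filter_upwards [hδ_nonneg, hu] with x hδx ⟨hux, hux_re⟩
  calc ‖u x - z‖ ≤ δ x * ‖u x‖ / z.re := norm_sub_le_of_sq_eq_mul_add hδx hux hux_re hz
    _ ≤ δ x * (1 + δ x + ‖z ^ 2‖) / z.re := by
      gcongr
      exact norm_le_of_sq_eq_mul_add hδx hux

theorem div_sqrt_sq_eq_rpow_mul_add {ε γ : ℝ} (hε : 0 < ε) {ν w : ℂ}
    (h : ν ^ 2 - ((ε ^ γ : ℝ) : ℂ) * ν - ε * w = 0) :
    (ν / Real.sqrt ε) ^ 2 = ((ε ^ (γ - 1 / 2) : ℝ) : ℂ) * (ν / Real.sqrt ε) + w := by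
  have hsplit : ε ^ γ = ε ^ (γ - 1 / 2) * Real.sqrt ε := by
    rw [Real.sqrt_eq_rpow, ← Real.rpow_add hε, sub_add_cancel]
  have ht : (Real.sqrt ε : ℂ) ^ 2 = ε := by
    rw [← ofReal_pow, Real.sq_sqrt hε.le]
  have ht0 : (Real.sqrt ε : ℂ) ≠ 0 := by exact_mod_cast (Real.sqrt_pos.mpr hε).ne'
  rw [hsplit, ofReal_mul] at h
  generalize ((ε ^ (γ - 1 / 2) : ℝ) : ℂ) = δ at h ⊢
  field_simp
  linear_combination h - w * ht

end Complex

/-- Let `ν_ε` be the unique root with positive real part of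
`z² − ε^γ z − (ε^{1+μ} s + i ε b) = 0`.  For `s > 0`, `b ∈ ℝ`, `γ > 1/2`, `μ = 0`,
`ν_ε/√ε` converges as `ε → 0⁺` to the principal square root of `s + i b` (the unique
square root with positive real part), whose real and imaginary parts are
`(√2/2)(s + √(s² + b²))^{1/2}` and `(√2/2) b (s + √(s² + b²))^{−1/2}`. -/
theorem stmt11 (s b γ μ : ℝ) (hs : 0 < s) (hγ : 1 / 2 < γ) (hμ : μ = 0)
    (nu : ℝ → ℂ)
    (hnu : ∀ ε : ℝ, 0 < ε →
      nu ε ^ 2 - ((ε ^ γ : ℝ) : ℂ) * nu ε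
          - (((ε ^ (1 + μ) : ℝ) : ℂ) * (s : ℂ) + Complex.I * (ε : ℂ) * (b : ℂ)) = 0 ∧
        0 < (nu ε).re) :
    let z : ℂ := ((Real.sqrt 2 / 2 * Real.sqrt (s + Real.sqrt (s ^ 2 + b ^ 2)) : ℝ) : ℂ) +
      Complex.I * ((Real.sqrt 2 / 2 * b * (Real.sqrt (s + Real.sqrt (s ^ 2 + b ^ 2)))⁻¹ : ℝ) : ℂ)
    z ^ 2 = (s : ℂ) + Complex.I * (b : ℂ) ∧ 0 < z.re ∧
      Tendsto (fun ε : ℝ => nu ε / ((Real.sqrt ε : ℝ) : ℂ))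
        (nhdsWithin 0 (Set.Ioi 0)) (nhds z) := by
  show Complex.principalSqrt s b ^ 2 = s + Complex.I * b ∧ 0 < (Complex.principalSqrt s b).re ∧
    Tendsto (fun ε : ℝ => nu ε / Real.sqrt ε) (𝓝[>] 0) (𝓝 (Complex.principalSqrt s b))
  have hsb : 0 < s + Real.sqrt (s ^ 2 + b ^ 2) := by positivity
  have hz_sq := Complex.principalSqrt_sq hsb
  have hz_re := Complex.principalSqrt_re_pos hsb
  have hexp : 0 < γ - 1 / 2 := by linarith
  refine ⟨hz_sq, hz_re,
    Complex.tendsto_of_sq_eq_mul_add (δ := fun ε => ε ^ (γ - 1 / 2)) ?_ ?_ ?_ hz_re⟩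
  · have h := (Real.continuousAt_rpow_const 0 _ (.inr hexp.le)).tendsto.mono_left
      (nhdsWithin_le_nhds (s := Set.Ioi 0))
    rwa [Real.zero_rpow hexp.ne'] at h
  · filter_upwards [self_mem_nhdsWithin] with ε hε using Real.rpow_nonneg hε.le _
  · filter_upwards [self_mem_nhdsWithin] with ε hε
    obtain ⟨hν, hν_re⟩ := hnu ε hε
    refine ⟨hz_sq ▸ Complex.div_sqrt_sq_eq_rpow_mul_add hε ?_, ?_⟩
    · rw [hμ, add_zero, Real.rpow_one] at hν
      linear_combination hν
    · rw [Complex.div_ofReal_re]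
      exact div_pos hν_re (Real.sqrt_pos.mpr hε)
end

section
/- Fix s > 0, b ∈ ℝ, γ = 0 and μ = 1. Then (ν_ε − 1 − i ε b)/ε² → s + b² as ε → 0⁺. -/
open Filter

/-- Let `ν_ε` be the unique root with positive real part of
`z² − ε^γ z − (ε^{1+μ} s + i ε b) = 0`.  For `s > 0`, `b ∈ ℝ`, `γ = 0`, `μ = 1`,
`(ν_ε − 1 − i ε b)/ε² → s + b²` as `ε → 0⁺`. -/
theorem stmt13 (s b γ μ : ℝ) (hs : 0 < s) (hγ : γ = 0) (hμ : μ = 1)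
    (nu : ℝ → ℂ)
    (hnu : ∀ ε : ℝ, 0 < ε →
      nu ε ^ 2 - ((ε ^ γ : ℝ) : ℂ) * nu ε
          - (((ε ^ (1 + μ) : ℝ) : ℂ) * (s : ℂ) + Complex.I * (ε : ℂ) * (b : ℂ)) = 0 ∧
        0 < (nu ε).re) :
    Tendsto (fun ε : ℝ => (nu ε - 1 - Complex.I * (ε : ℂ) * (b : ℂ)) / (ε : ℂ) ^ 2)
      (nhdsWithin 0 (Set.Ioi 0)) (nhds (((s + b ^ 2 : ℝ)) : ℂ)) := by
  subst hγ hμ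
  -- key quadratic identity
  have key : ∀ ε : ℝ, 0 < ε →
      (nu ε - 1) * nu ε = (ε:ℂ)^2 * s + Complex.I * ε * b := by
    intro ε hε
    have h := (hnu ε hε).1
    have h0 : (ε:ℝ) ^ (0:ℝ) = 1 := Real.rpow_zero ε
    have h2 : (ε:ℝ) ^ ((1:ℝ)+1) = ε ^ 2 := by
      rw [show ((1:ℝ)+1) = ((2:ℕ):ℝ) by norm_num, Real.rpow_natCast]
    rw [h0, h2] at h
    push_cast at h
    linear_combination h
  have hre : ∀ ε : ℝ, 0 < ε → 1 ≤ (nu ε).re := by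
    intro ε hε
    have h := key ε hε
    have hre0 := (hnu ε hε).2
    have hr := congrArg Complex.re h
    simp [Complex.mul_re, Complex.mul_im, Complex.sub_re, Complex.add_re,
      Complex.I_re, Complex.I_im, Complex.ofReal_re, Complex.ofReal_im, pow_two] at hr
    nlinarith [sq_nonneg ((nu ε).im), mul_pos (mul_pos hε hε) hs, hre0]
  have hxb : ∀ ε : ℝ, 0 < ε → ‖nu ε - 1‖ ≤ ε^2*s + ε*|b| := by
    intro ε hε
    have h1 : 1 ≤ ‖nu ε‖ := by
      calc (1:ℝ) ≤ (nu ε).re := hre ε hε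
        _ ≤ |(nu ε).re| := le_abs_self _
        _ ≤ ‖nu ε‖ := Complex.abs_re_le_norm _
    calc ‖nu ε - 1‖ ≤ ‖nu ε - 1‖ * ‖nu ε‖ := le_mul_of_one_le_right (norm_nonneg _) h1
      _ = ‖(nu ε - 1) * nu ε‖ := (norm_mul _ _).symm
      _ = ‖(ε:ℂ)^2 * s + Complex.I * ε * b‖ := by rw [key ε hε]
      _ ≤ ‖(ε:ℂ)^2 * (s:ℂ)‖ + ‖Complex.I * ε * b‖ := norm_add_le _ _
      _ = ε^2*s + ε*|b| := by
          simp [norm_mul, Complex.norm_real, abs_of_pos hε, abs_of_pos hs,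
            abs_of_pos (pow_pos hε 2)]
  -- nu ε - 1 - I ε b = ε² s - (nu ε - 1)²
  have hδ : ∀ ε : ℝ, 0 < ε →
      nu ε - 1 - Complex.I * ε * b = (ε:ℂ)^2 * s - (nu ε - 1)^2 := by
    intro ε hε
    linear_combination key ε hε
  have hg : Tendsto (fun ε : ℝ => (nu ε - 1) / ε) (nhdsWithin 0 (Set.Ioi 0))
      (nhds (Complex.I * b)) := by
    rw [tendsto_iff_norm_sub_tendsto_zero]
    apply squeeze_zero_norm' (a := fun ε : ℝ => ε*s + ε*(ε*s+|b|)^2)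
    · filter_upwards [self_mem_nhdsWithin] with ε (hε : 0 < ε)
      have hεC : (ε:ℂ) ≠ 0 := Complex.ofReal_ne_zero.mpr hε.ne'
      have heq : (nu ε - 1) / ε - Complex.I * b = (nu ε - 1 - Complex.I * ε * b) / ε := by
        field_simp
      rw [heq, hδ ε hε, norm_div]
      have hnorm : ‖(ε:ℂ)‖ = ε := by
        simp [Complex.norm_real, abs_of_pos hε]
      rw [hnorm, Real.norm_of_nonneg (div_nonneg (norm_nonneg _) hε.le)]
      rw [div_le_iff₀ hε]
      have h1 : ‖(ε:ℂ)^2 * s - (nu ε - 1)^2‖ ≤ ε^2*s + (ε^2*s + ε*|b|)^2 := by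
        calc ‖(ε:ℂ)^2 * s - (nu ε - 1)^2‖ ≤ ‖(ε:ℂ)^2 * (s:ℂ)‖ + ‖(nu ε - 1)^2‖ :=
              norm_sub_le _ _
          _ ≤ ε^2*s + (ε^2*s + ε*|b|)^2 := by
              have : ‖(nu ε - 1)^2‖ ≤ (ε^2*s + ε*|b|)^2 := by
                rw [norm_pow]
                exact pow_le_pow_left₀ (norm_nonneg _) (hxb ε hε) 2
              have h2 : ‖(ε:ℂ)^2 * (s:ℂ)‖ = ε^2*s := by
                simp [norm_mul, Complex.norm_real, abs_of_pos hs, abs_of_pos hε,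
                  abs_of_pos (pow_pos hε 2)]
              linarith
      calc ‖(ε:ℂ)^2 * s - (nu ε - 1)^2‖ ≤ ε^2*s + (ε^2*s + ε*|b|)^2 := h1
        _ = (ε*s + ε*(ε*s+|b|)^2) * ε := by ring
    · have hc : Continuous (fun ε : ℝ => ε*s + ε*(ε*s+|b|)^2) := by continuity
      have := hc.tendsto 0
      simp only [zero_mul, zero_add, add_zero] at this
      exact this.mono_left nhdsWithin_le_nhds
  have hfinal : Tendsto (fun ε : ℝ => (s:ℂ) - ((nu ε - 1)/ε)^2)
      (nhdsWithin 0 (Set.Ioi 0)) (nhds ((s:ℂ) - (Complex.I * b)^2)) :=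
    tendsto_const_nhds.sub (hg.pow 2)
  have hval : (s:ℂ) - (Complex.I * b)^2 = ((s + b^2 : ℝ) : ℂ) := by
    push_cast
    have : Complex.I^2 = -1 := Complex.I_sq
    ring_nf
    rw [Complex.I_sq]
    ring
  rw [← hval]
  apply hfinal.congr'
  filter_upwards [self_mem_nhdsWithin] with ε (hε : 0 < ε)
  have hεC : (ε:ℂ) ≠ 0 := Complex.ofReal_ne_zero.mpr hε.ne'
  have h := hδ ε hε
  field_simp
  linear_combination (-1 : ℂ) * key ε hε
end

section
/- Fix s > 0, b ∈ ℝ, γ = 0 and μ = 1. Then (λ_ε + (1 + √5)/2 + i ε b/√5)/ε² → −(s/√5 + b²/(5√5)) as ε → 0⁺. -/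
/-!
Shift by the golden ratio: since `z² + z − 1 = (z + φ)(z + ψ)` and `ψ = φ − √5`, the root
equation becomes `L (L − √5) = ε² s + i ε b` for `L = λ_ε + φ`. The condition `Re λ_ε < 0` keeps
the factor `L − √5` at distance at least `−ψ > 0` from the origin, so `L → 0`; solving the
product equation for `L` then gives `L = −i ε b/√5 − ε² (s/√5 + b²/√5³) + o(ε²)`.
-/

open Filter Topology Complex Real goldenRatio

lemma ofReal_sqrt_five_sq : ((√5 : ℝ) : ℂ) ^ 2 = 5 := by
  rw [← ofReal_pow, sq_sqrt (by norm_num : (0 : ℝ) ≤ 5)]; norm_num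

lemma add_goldenRatio_mul_eq_of_sq_add_self_sub {z w : ℂ} (h : z ^ 2 + z - (w + 1) = 0) :
    (z + φ) * (z + φ - √5) = w := by
  simp only [goldenRatio]
  push_cast
  linear_combination h - (1 / 4 : ℂ) * ofReal_sqrt_five_sq

lemma le_norm_sub_ofReal_of_re_neg {z : ℂ} (c : ℝ) (hz : z.re < 0) :
    c ≤ ‖z - c‖ :=
  calc c ≤ -(z - c).re := by simp only [sub_re, ofReal_re]; linarith
    _ ≤ ‖z - c‖ := (neg_le_abs _).trans (abs_re_le_norm _)

lemma neg_goldenConj_le_norm_add_goldenRatio_sub {z : ℂ} (hz : z.re < 0) :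
    -ψ ≤ ‖z + φ - √5‖ := by
  convert le_norm_sub_ofReal_of_re_neg (-ψ) hz using 2
  push_cast [goldenConj]
  ring

lemma tendsto_zero_of_tendsto_mul_zero_of_le_norm {α 𝕜 : Type*} [NormedDivisionRing 𝕜]
    {l : Filter α} {f g : α → 𝕜} {c : ℝ} (hc : 0 < c) (hg : ∀ᶠ x in l, c ≤ ‖g x‖)
    (hfg : Tendsto (fun x => f x * g x) l (𝓝 0)) : Tendsto f l (𝓝 0) := by
  refine squeeze_zero_norm' ?_ ((hfg.norm.div_const c).trans (by simp))
  filter_upwards [hg] with x hx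
  rw [le_div_iff₀ hc, norm_mul]
  exact mul_le_mul_of_nonneg_left hx (norm_nonneg _)

-- Unlike the left-hand side, the right-hand side is continuous at `L = 0`, `e = 0`.
lemma div_sq_eq_of_mul_sub_eq {L r e S B : ℂ} (h : L * (L - r) = e ^ 2 * S + I * e * B)
    (he : e ≠ 0) (hL : L - r ≠ 0) (hr : r ≠ 0) :
    (L + I * e * B / r) / e ^ 2
      = (r * S * (L - r) + I * B * (e * S + I * B)) / (r * (L - r) ^ 2) := by
  have hL' : L + I * e * B / r = (r * L + I * e * B) / r := by field_simp
  rw [hL', div_div, div_eq_div_iff (by simp [hr, he]) (by simp [hr, hL])]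
  linear_combination (r ^ 2 * (L - r) + r * I * e * B) * h

theorem tendsto_div_sq_of_mul_sub_eq {α : Type*} {l : Filter α} {L e : α → ℂ} {r S B : ℂ}
    (hr : r ≠ 0) (hL : Tendsto L l (𝓝 0)) (he : Tendsto e l (𝓝 0)) (he0 : ∀ᶠ x in l, e x ≠ 0)
    (heq : ∀ᶠ x in l, L x * (L x - r) = e x ^ 2 * S + I * e x * B) :
    Tendsto (fun x => (L x + I * e x * B / r) / e x ^ 2) l (𝓝 (-(S / r + B ^ 2 / r ^ 3))) := by
  have hLr : Tendsto (fun x => L x - r) l (𝓝 (-r)) := by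
    simpa using hL.sub_const r
  have hlim := ((tendsto_const_nhds (x := r * S)).mul hLr |>.add
    ((tendsto_const_nhds (x := I * B)).mul ((he.mul_const S).add_const (I * B)))).div
    ((tendsto_const_nhds (x := r)).mul (hLr.pow 2)) (by simp [hr])
  have hval : (r * S * -r + I * B * (0 * S + I * B)) / (r * (-r) ^ 2)
      = -(S / r + B ^ 2 / r ^ 3) := by
    field_simp
    linear_combination B ^ 2 * I_sq
  rw [hval] at hlim
  refine hlim.congr' ?_
  filter_upwards [heq, he0, hLr.eventually_ne (neg_ne_zero.mpr hr)] with x hx hex hLx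
  exact (div_sq_eq_of_mul_sub_eq hx hex hLx hr).symm

theorem stmt14_general (s b γ μ : ℝ) (hγ : γ = 0) (hμ : μ = 1)
    (lam : ℝ → ℂ)
    (hlam : ∀ ε : ℝ, 0 < ε →
      lam ε ^ 2 + ((ε ^ γ : ℝ) : ℂ) * lam ε
          - (((ε ^ (1 + μ) : ℝ) : ℂ) * (s : ℂ) + Complex.I * (ε : ℂ) * (b : ℂ) + 1) = 0 ∧
        (lam ε).re < 0) :
    Tendsto (fun ε : ℝ =>
        (lam ε + (((1 + Real.sqrt 5) / 2 : ℝ) : ℂ)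
            + Complex.I * (ε : ℂ) * (b : ℂ) / ((Real.sqrt 5 : ℝ) : ℂ)) / (ε : ℂ) ^ 2)
      (nhdsWithin 0 (Set.Ioi 0))
      (nhds (((-(s / Real.sqrt 5 + b ^ 2 / (5 * Real.sqrt 5)) : ℝ)) : ℂ)) := by
  subst hγ hμ
  have hpos : ∀ᶠ ε in 𝓝[>] (0 : ℝ), 0 < ε := self_mem_nhdsWithin
  have hprod : ∀ᶠ ε in 𝓝[>] (0 : ℝ), (lam ε + φ) * (lam ε + φ - √5)
      = (ε : ℂ) ^ 2 * s + I * ε * b := by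
    filter_upwards [hpos] with ε hε
    have h := (hlam ε hε).1
    rw [rpow_zero, show (1 + 1 : ℝ) = 2 by norm_num, rpow_two] at h
    push_cast at h
    exact add_goldenRatio_mul_eq_of_sq_add_self_sub (by linear_combination h)
  have hfar : ∀ᶠ ε in 𝓝[>] (0 : ℝ), -ψ ≤ ‖lam ε + φ - √5‖ :=
    hpos.mono fun ε hε => neg_goldenConj_le_norm_add_goldenRatio_sub (hlam ε hε).2
  have hε : Tendsto (fun ε : ℝ => (ε : ℂ)) (𝓝[>] 0) (𝓝 0) :=
    (continuous_ofReal.tendsto' 0 0 ofReal_zero).mono_left nhdsWithin_le_nhds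
  have hsmall : Tendsto (fun ε : ℝ => lam ε + φ) (𝓝[>] 0) (𝓝 0) := by
    refine tendsto_zero_of_tendsto_mul_zero_of_le_norm (neg_pos.mpr goldenConj_neg) hfar ?_
    refine Tendsto.congr' (hprod.mono fun ε h => h.symm) ?_
    simpa using (hε.pow 2 |>.mul_const (s : ℂ)).add (hε.const_mul I |>.mul_const (b : ℂ))
  have hlim := tendsto_div_sq_of_mul_sub_eq (ofReal_ne_zero.mpr (by positivity)) hsmall hε
    (hpos.mono fun ε h => ofReal_ne_zero.mpr h.ne') hprod
  convert hlim using 2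
  have h5 : (√5 : ℂ) ≠ 0 := ofReal_ne_zero.mpr (by positivity)
  push_cast
  field_simp
  linear_combination (-b ^ 2 : ℂ) * ofReal_sqrt_five_sq

/-- Let `λ_ε` be the unique root with negative real part of
`z² + ε^γ z − (ε^{1+μ} s + i ε b + 1) = 0`.  For `s > 0`, `b ∈ ℝ`, `γ = 0`, `μ = 1`,
`(λ_ε + (1 + √5)/2 + i ε b/√5)/ε² → −(s/√5 + b²/(5√5))` as `ε → 0⁺`. -/
theorem stmt14 (s b γ μ : ℝ) (hs : 0 < s) (hγ : γ = 0) (hμ : μ = 1)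
    (lam : ℝ → ℂ)
    (hlam : ∀ ε : ℝ, 0 < ε →
      lam ε ^ 2 + ((ε ^ γ : ℝ) : ℂ) * lam ε
          - (((ε ^ (1 + μ) : ℝ) : ℂ) * (s : ℂ) + Complex.I * (ε : ℂ) * (b : ℂ) + 1) = 0 ∧
        (lam ε).re < 0) :
    Tendsto (fun ε : ℝ =>
        (lam ε + (((1 + Real.sqrt 5) / 2 : ℝ) : ℂ)
            + Complex.I * (ε : ℂ) * (b : ℂ) / ((Real.sqrt 5 : ℝ) : ℂ)) / (ε : ℂ) ^ 2)
      (nhdsWithin 0 (Set.Ioi 0))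
      (nhds (((-(s / Real.sqrt 5 + b ^ 2 / (5 * Real.sqrt 5)) : ℝ)) : ℂ)) :=
  stmt14_general s b γ μ hγ hμ lam hlam
end

section
/- Fix s > 0, b ∈ ℝ, γ < 0 and μ = 1. Then λ_ε / ε^γ → −1 and ν_ε / ε^γ → 1 as ε → 0⁺. -/
/-!
Put `t = ε^γ` and `u = λ_ε / t` (resp. `u = -ν_ε / t`). The quadratic equation becomes
`u (u + 1) = W / t²` with `Re W ≥ 0` and `W` bounded as `ε → 0⁺`, while `t → ∞` since `γ < 0`;
hence `u (u + 1) → 0`. A root of `u (u + 1) = δ` with `Re u < 0` and `Re δ ≥ 0` stays away from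
`0` (`|u| > 1/2`), so it must be the one near `-1`: `|u + 1| ≤ 2 |δ|`.
-/

open Filter Topology

theorem norm_add_one_le_two_mul_norm_mul_add_one {u : ℂ} (hu : u.re < 0)
    (hδ : 0 ≤ (u * (u + 1)).re) : ‖u + 1‖ ≤ 2 * ‖u * (u + 1)‖ := by
  have hnorm : 1 / 2 < ‖u‖ := by
    by_contra! hsmall
    have hre : -(1 / 2) ≤ u.re := by
      have := (abs_le.mp ((Complex.abs_re_le_norm u).trans hsmall)).1
      linarith
    have hδre : (u * (u + 1)).re = u.re * (u.re + 1) - u.im ^ 2 := by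
      simp only [Complex.mul_re, Complex.add_re, Complex.add_im, Complex.one_re, Complex.one_im]
      ring
    nlinarith [sq_nonneg u.im]
  rw [norm_mul]
  nlinarith [norm_nonneg (u + 1)]

theorem tendsto_add_one_of_tendsto_mul_add_one {α : Type*} {l : Filter α} {u : α → ℂ}
    (hu : ∀ᶠ x in l, (u x).re < 0) (hδ : ∀ᶠ x in l, 0 ≤ (u x * (u x + 1)).re)
    (hlim : Tendsto (fun x => u x * (u x + 1)) l (𝓝 0)) :
    Tendsto (fun x => u x + 1) l (𝓝 0) := by
  have hbound : Tendsto (fun x => 2 * ‖u x * (u x + 1)‖) l (𝓝 0) := by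
    simpa using hlim.norm.const_mul 2
  refine squeeze_zero_norm' ?_ hbound
  filter_upwards [hu, hδ] with x hux hδx
  exact norm_add_one_le_two_mul_norm_mul_add_one hux hδx

theorem tendsto_div_rpow_sq_nhdsGT_zero {γ : ℝ} (hγ : γ < 0) {W : ℝ → ℂ} {c : ℂ}
    (hW : Tendsto W (𝓝[>] 0) (𝓝 c)) :
    Tendsto (fun ε : ℝ => W ε / ((ε ^ γ : ℝ) : ℂ) ^ 2) (𝓝[>] 0) (𝓝 0) := by
  have ht : Tendsto (fun ε : ℝ => ((ε ^ γ) ^ 2)⁻¹) (𝓝[>] 0) (𝓝 0) :=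
    tendsto_inv_atTop_zero.comp ((tendsto_pow_atTop two_ne_zero).comp
      (tendsto_rpow_neg_nhdsGT_zero hγ))
  have hprod := hW.mul (Complex.continuous_ofReal.tendsto 0 |>.comp ht)
  simp only [mul_zero, Complex.ofReal_zero] at hprod
  refine hprod.congr fun ε => ?_
  simp [div_eq_mul_inv]

theorem tendsto_div_rpow_of_sq_add_rpow_mul_eq {γ : ℝ} (hγ : γ < 0) {W z : ℝ → ℂ} {c : ℂ}
    (hW : Tendsto W (𝓝[>] 0) (𝓝 c)) (hWre : ∀ ε : ℝ, 0 < ε → 0 ≤ (W ε).re)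
    (hz : ∀ ε : ℝ, 0 < ε → z ε ^ 2 + ((ε ^ γ : ℝ) : ℂ) * z ε = W ε ∧ (z ε).re < 0) :
    Tendsto (fun ε : ℝ => z ε / ((ε ^ γ : ℝ) : ℂ)) (𝓝[>] 0) (𝓝 (-1)) := by
  have hscaled : ∀ ε : ℝ, 0 < ε →
      z ε / ((ε ^ γ : ℝ) : ℂ) * (z ε / ((ε ^ γ : ℝ) : ℂ) + 1) = W ε / ((ε ^ γ : ℝ) : ℂ) ^ 2 := by
    intro ε hε
    have ht : ((ε ^ γ : ℝ) : ℂ) ≠ 0 := by exact_mod_cast (Real.rpow_pos_of_pos hε γ).ne'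
    rw [← (hz ε hε).1]
    field_simp
  have hlim := tendsto_add_one_of_tendsto_mul_add_one
    (u := fun ε => z ε / ((ε ^ γ : ℝ) : ℂ)) ?_ ?_
    ((tendsto_div_rpow_sq_nhdsGT_zero hγ hW).congr' ?_)
  · simpa using hlim.add_const (-1)
  all_goals filter_upwards [self_mem_nhdsWithin] with ε (hε : 0 < ε)
  · rw [Complex.div_ofReal_re]
    exact div_neg_of_neg_of_pos (hz ε hε).2 (Real.rpow_pos_of_pos hε γ)
  · rw [hscaled ε hε, ← Complex.ofReal_pow, Complex.div_ofReal_re]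
    exact div_nonneg (hWre ε hε) (by positivity)
  · exact (hscaled ε hε).symm

/-- Let `λ_ε` (resp. `ν_ε`) be the unique root with negative (resp. positive) real
part of `z² + ε^γ z − (ε^{1+μ} s + i ε b + 1) = 0` (resp. `z² − ε^γ z − (ε^{1+μ} s + i ε b) = 0`).
For `s > 0`, `b ∈ ℝ`, `γ < 0`, `μ = 1`, one has `λ_ε/ε^γ → −1` and `ν_ε/ε^γ → 1`
as `ε → 0⁺`. -/
theorem stmt15 (s b γ μ : ℝ) (hs : 0 < s) (hγ : γ < 0) (hμ : μ = 1)
    (lam nu : ℝ → ℂ)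
    (hlam : ∀ ε : ℝ, 0 < ε →
      lam ε ^ 2 + ((ε ^ γ : ℝ) : ℂ) * lam ε
          - (((ε ^ (1 + μ) : ℝ) : ℂ) * (s : ℂ) + Complex.I * (ε : ℂ) * (b : ℂ) + 1) = 0 ∧
        (lam ε).re < 0)
    (hnu : ∀ ε : ℝ, 0 < ε →
      nu ε ^ 2 - ((ε ^ γ : ℝ) : ℂ) * nu ε
          - (((ε ^ (1 + μ) : ℝ) : ℂ) * (s : ℂ) + Complex.I * (ε : ℂ) * (b : ℂ)) = 0 ∧
        0 < (nu ε).re) :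
    Tendsto (fun ε : ℝ => lam ε / ((ε ^ γ : ℝ) : ℂ)) (nhdsWithin 0 (Set.Ioi 0)) (nhds (-1)) ∧
    Tendsto (fun ε : ℝ => nu ε / ((ε ^ γ : ℝ) : ℂ)) (nhdsWithin 0 (Set.Ioi 0)) (nhds 1) := by
  subst hμ
  set W : ℝ → ℂ := fun ε => ((ε ^ (1 + 1 : ℝ) : ℝ) : ℂ) * s + Complex.I * ε * b
  have hWcont : Continuous W := by
    have := Real.continuous_rpow_const (q := 1 + 1) (by norm_num)
    fun_prop
  have hW : Tendsto W (𝓝[>] 0) (𝓝 0) := by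
    simpa [W] using (hWcont.tendsto 0).mono_left nhdsWithin_le_nhds
  have hWre : ∀ ε : ℝ, 0 < ε → 0 ≤ (W ε).re := fun ε hε => by
    simpa [W] using mul_nonneg (Real.rpow_nonneg hε.le (1 + 1)) hs.le
  refine ⟨tendsto_div_rpow_of_sq_add_rpow_mul_eq hγ (hW.add_const 1)
      (fun ε hε => by simpa using add_nonneg (hWre ε hε) zero_le_one)
      (fun ε hε => ⟨by linear_combination (hlam ε hε).1, (hlam ε hε).2⟩), ?_⟩
  have hneg := tendsto_div_rpow_of_sq_add_rpow_mul_eq hγ hW hWre (z := fun ε => -nu ε)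
    fun ε hε => ⟨by linear_combination (hnu ε hε).1, by simpa using (hnu ε hε).2⟩
  simpa [neg_div] using hneg.neg
end

section
/- Fix s > 0, ξ ∈ ℝ, γ > 1/2 and μ = 0. Define N(ε) = (1/2) Σ_{v ∈ {−1,1}} (1/(−λ_ε(v) ν_ε(v))) · (1 + 2ε^γ/(ν_ε(v) − λ_ε(v) − 2ε^γ)) and D(ε) = 1 − (1/2) Σ_{v ∈ {−1,1}} 1/(−λ_ε(v)(ν_ε(v) − λ_ε(v) − 2ε^γ)). Then for all sufficiently small ε > 0 one has D(ε) ≠ 0, and ε · N(ε)/D(ε) → 1/√(s² + ξ²) as ε → 0⁺. -/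
open Filter Topology Complex ComplexConjugate

/-!
Completing the square, `-2λ - ε^γ` and `2ν - ε^γ` are the square roots in the right half-plane
of `ε^{2γ} + 4 + 4w` and `ε^{2γ} + 4w`, where `w = ε (s + iξv)`. Hence `λ → -1` and
`ν / √ε → q_v`, the square root of `s + iξv` with positive real part; `γ > 1/2` enters through
`ε^γ / √ε → 0`. The two quadratics give `-λ(ν - λ - 2ε^γ) - 1 = (ν - ε^γ)(ν - λ)`, so
`√ε N → (q₁⁻¹ + q₋₁⁻¹)/2` and `D / √ε → (q₁ + q₋₁)/2`. As `q₋₁ = conj q₁`, the ratio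
`ε N / D = (√ε N) / (D / √ε)` tends to `1 / |q₁|² = 1 / √(s² + ξ²)`.
-/

theorem tendsto_of_tendsto_sq_of_re_nonneg {α : Type*} {l : Filter α} {f : α → ℂ} {b : ℂ}
    (hb : 0 < b.re) (hre : ∀ᶠ x in l, 0 ≤ (f x).re)
    (hsq : Tendsto (fun x => f x ^ 2) l (𝓝 (b ^ 2))) :
    Tendsto f l (𝓝 b) := by
  rw [tendsto_iff_norm_sub_tendsto_zero]
  have h0 : Tendsto (fun x => ‖f x ^ 2 - b ^ 2‖ / b.re) l (𝓝 0) := by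
    have h := (hsq.sub_const (b ^ 2)).norm.div_const b.re
    rwa [sub_self, norm_zero, zero_div] at h
  refine squeeze_zero' (Eventually.of_forall fun x => norm_nonneg _) ?_ h0
  filter_upwards [hre] with x hx
  -- on the right half-plane `‖f + b‖ ≥ Re b`, so `‖f - b‖ ≤ ‖f² - b²‖ / Re b`
  have hsum : b.re ≤ ‖f x + b‖ := by
    calc b.re ≤ (f x + b).re := by rw [add_re]; linarith
      _ ≤ ‖f x + b‖ := re_le_norm _
  rw [show f x ^ 2 - b ^ 2 = (f x - b) * (f x + b) by ring, norm_mul, le_div_iff₀ hb]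
  exact mul_le_mul_of_nonneg_left hsum (norm_nonneg _)

theorem re_two_mul_sub_pos {a : ℝ} {z w : ℂ} (hw : 0 ≤ w.re) (hz : 0 < z.re)
    (h : z ^ 2 - a * z - w = 0) : 0 < (2 * z - a).re := by
  have hsq : (2 * z - a) ^ 2 = a ^ 2 + 4 * w := by linear_combination 4 * h
  have hre := congrArg re hsq
  simp only [sq, mul_re, mul_im, sub_re, sub_im, add_re, ofReal_re, ofReal_im, re_ofNat,
    im_ofNat] at hre hz ⊢
  nlinarith [sq_nonneg (2 * z.im)]

theorem tendsto_of_sq_sub_mul_sub_eq_zero {α : Type*} {l : Filter α} {a : α → ℝ}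
    {z w : α → ℂ} {q : ℂ} (hq : 0 < q.re) (ha : Tendsto a l (𝓝 0))
    (hw : Tendsto w l (𝓝 (q ^ 2))) (hwre : ∀ᶠ x in l, 0 ≤ (w x).re)
    (hz : ∀ᶠ x in l, z x ^ 2 - a x * z x - w x = 0 ∧ 0 < (z x).re) :
    Tendsto z l (𝓝 q) := by
  have ha' : Tendsto (fun x => (a x : ℂ)) l (𝓝 0) := by simpa using ha.ofReal
  have hdisc : Tendsto (fun x => 2 * z x - a x) l (𝓝 (2 * q)) := by
    refine tendsto_of_tendsto_sq_of_re_nonneg (by simpa using hq) ?_ ?_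
    · filter_upwards [hz, hwre] with x hzx hwx using (re_two_mul_sub_pos hwx hzx.2 hzx.1).le
    · have hlim := (ha'.pow 2).add (hw.const_mul 4)
      rw [show (0 : ℂ) ^ 2 + 4 * q ^ 2 = (2 * q) ^ 2 by ring] at hlim
      refine hlim.congr' ?_
      filter_upwards [hz] with x hzx
      linear_combination -4 * hzx.1
  have hlim := (hdisc.add ha').div_const 2
  rw [add_zero, mul_div_cancel_left₀ _ two_ne_zero] at hlim
  exact hlim.congr fun x => by ring

theorem exists_sq_eq_and_re_pos {p : ℂ} (hp : 0 < p.re) : ∃ q : ℂ, q ^ 2 = p ∧ 0 < q.re := by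
  obtain ⟨q, hq⟩ := IsAlgClosed.exists_pow_nat_eq p two_pos
  have hre : p.re = q.re ^ 2 - q.im ^ 2 := by rw [← hq, sq, mul_re]; ring
  rcases lt_trichotomy q.re 0 with h | h | h
  · exact ⟨-q, by rw [neg_sq, hq], by simpa using h⟩
  · nlinarith [sq_nonneg q.im]
  · exact ⟨q, hq, h⟩

theorem inv_add_inv_conj_div_add_conj {q : ℂ} (hq : 0 < q.re) :
    (q⁻¹ + (conj q)⁻¹) / (q + conj q) = ((‖q ^ 2‖⁻¹ : ℝ) : ℂ) := by
  have hq0 : q ≠ 0 := fun h => hq.ne' (by simp [h])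
  have hsum : q + conj q ≠ 0 := by
    rw [add_conj]
    exact_mod_cast (mul_pos two_pos hq).ne'
  rw [inv_add_inv hq0 ((map_ne_zero _).mpr hq0), norm_pow, ofReal_inv, ofReal_pow, ← mul_conj']
  field_simp

theorem tendsto_roots {α : Type*} {l : Filter α} {a c : α → ℝ} {w lam nu : α → ℂ} {q : ℂ}
    (hq : 0 < q.re) (hcpos : ∀ᶠ x in l, 0 < c x) (hc : Tendsto c l (𝓝 0))
    (ha : Tendsto a l (𝓝 0)) (hac : Tendsto (fun x => a x / c x) l (𝓝 0))
    (hw : Tendsto (fun x => w x / (c x : ℂ) ^ 2) l (𝓝 (q ^ 2)))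
    (hwre : ∀ᶠ x in l, 0 ≤ (w x).re)
    (hlam : ∀ᶠ x in l, lam x ^ 2 + a x * lam x - (w x + 1) = 0 ∧ (lam x).re < 0)
    (hnu : ∀ᶠ x in l, nu x ^ 2 - a x * nu x - w x = 0 ∧ 0 < (nu x).re) :
    Tendsto lam l (𝓝 (-1)) ∧ Tendsto nu l (𝓝 0) ∧ Tendsto (fun x => nu x / c x) l (𝓝 q) := by
  have hc' : Tendsto (fun x => (c x : ℂ)) l (𝓝 0) := by simpa using hc.ofReal
  have hcne : ∀ᶠ x in l, (c x : ℂ) ≠ 0 := hcpos.mono fun x hx => ofReal_ne_zero.mpr hx.ne'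
  have hw0 : Tendsto w l (𝓝 0) := by
    have h := hw.mul (hc'.pow 2)
    rw [zero_pow two_ne_zero, mul_zero] at h
    refine h.congr' ?_
    filter_upwards [hcne] with x hx
    field_simp
  have hlam' : Tendsto (fun x => -lam x) l (𝓝 1) := by
    refine tendsto_of_sq_sub_mul_sub_eq_zero one_pos ha (by simpa using hw0.const_add 1) ?_ ?_
    · filter_upwards [hwre] with x hx
      simp only [add_re, one_re]
      linarith
    · filter_upwards [hlam] with x ⟨hx, hre⟩
      exact ⟨by linear_combination hx, by simpa using hre⟩
  have hnuc : Tendsto (fun x => nu x / c x) l (𝓝 q) := by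
    refine tendsto_of_sq_sub_mul_sub_eq_zero hq hac hw ?_ ?_
    · filter_upwards [hwre] with x hx
      rw [← ofReal_pow, div_ofReal_re]
      positivity
    · filter_upwards [hnu, hcne, hcpos] with x ⟨hx, hre⟩ hcx hcpx
      refine ⟨?_, by rw [div_ofReal_re]; positivity⟩
      push_cast
      field_simp
      linear_combination hx
  refine ⟨by simpa using hlam'.neg, ?_, hnuc⟩
  have h := hnuc.mul hc'
  rw [mul_zero] at h
  refine h.congr' ?_
  filter_upwards [hcne] with x hx
  field_simp

noncomputable section

-- `N = ½ Σ_v numeratorTerm ε^γ λ_ε(v) ν_ε(v)` and `D = 1 - ½ Σ_v denominatorTerm ε^γ λ_ε(v) ν_ε(v)`.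
def numeratorTerm (a lam nu : ℂ) : ℂ := (-lam * nu)⁻¹ * (1 + 2 * a / (nu - lam - 2 * a))

def denominatorTerm (a lam nu : ℂ) : ℂ := (-lam * (nu - lam - 2 * a))⁻¹

end

section Summands

variable {α : Type*} {l : Filter α} {a c lam nu w : α → ℂ} {q : ℂ}

theorem tendsto_sub_sub_two_mul (ha : Tendsto a l (𝓝 0)) (hlam : Tendsto lam l (𝓝 (-1)))
    (hnu : Tendsto nu l (𝓝 0)) :
    Tendsto (fun x => nu x - lam x - 2 * a x) l (𝓝 1) := by
  simpa using (hnu.sub hlam).sub (ha.const_mul 2)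

theorem tendsto_mul_numeratorTerm (ha : Tendsto a l (𝓝 0)) (hlam : Tendsto lam l (𝓝 (-1)))
    (hnu : Tendsto nu l (𝓝 0)) (hnuc : Tendsto (fun x => nu x / c x) l (𝓝 q)) (hq : q ≠ 0) :
    Tendsto (fun x => c x * numeratorTerm (a x) (lam x) (nu x)) l (𝓝 q⁻¹) := by
  have hlim := ((hlam.neg.inv₀ (by norm_num)).mul (hnuc.inv₀ hq)).mul
    (((ha.const_mul 2).div (tendsto_sub_sub_two_mul ha hlam hnu) one_ne_zero).const_add 1)
  rw [neg_neg, inv_one, one_mul, mul_zero, zero_div, add_zero, mul_one] at hlim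
  refine hlim.congr fun x => ?_
  rw [Pi.div_apply, numeratorTerm, mul_inv, inv_div, div_eq_mul_inv]
  ring

theorem tendsto_one_sub_denominatorTerm_div (ha : Tendsto a l (𝓝 0))
    (hac : Tendsto (fun x => a x / c x) l (𝓝 0)) (hlam : Tendsto lam l (𝓝 (-1)))
    (hnu : Tendsto nu l (𝓝 0)) (hnuc : Tendsto (fun x => nu x / c x) l (𝓝 q))
    (hroots : ∀ᶠ x in l, lam x ^ 2 + a x * lam x - (w x + 1) = 0 ∧
      nu x ^ 2 - a x * nu x - w x = 0) :
    Tendsto (fun x => (1 - denominatorTerm (a x) (lam x) (nu x)) / c x) l (𝓝 q) := by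
  have hX : Tendsto (fun x => -lam x * (nu x - lam x - 2 * a x)) l (𝓝 1) := by
    simpa using hlam.neg.mul (tendsto_sub_sub_two_mul ha hlam hnu)
  have hlim := ((hnuc.sub hac).mul (hnu.sub hlam)).mul (hX.inv₀ one_ne_zero)
  rw [sub_zero, zero_sub, neg_neg, inv_one, mul_one, mul_one] at hlim
  refine hlim.congr' ?_
  filter_upwards [hroots, hX.eventually_ne one_ne_zero] with x ⟨hl, hn⟩ hXx
  -- the constant term of `-λ(ν - λ - 2a) - 1` cancels between the two quadratics
  have hfactor : -lam x * (nu x - lam x - 2 * a x) - 1 = (nu x - a x) * (nu x - lam x) := by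
    linear_combination hl - hn
  have hsub : 1 - (-lam x * (nu x - lam x - 2 * a x))⁻¹ =
      (nu x - a x) * (nu x - lam x) * (-lam x * (nu x - lam x - 2 * a x))⁻¹ := by
    rw [← hfactor, sub_mul, mul_inv_cancel₀ hXx, one_mul]
  rw [denominatorTerm, hsub]
  ring

end Summands

theorem tendsto_rpow_nhdsGT_zero {β : ℝ} (hβ : 0 < β) :
    Tendsto (fun x : ℝ => x ^ β) (𝓝[>] 0) (𝓝 0) := by
  have h := (Real.continuousAt_rpow_const 0 β (Or.inr hβ.le)).tendsto
  rw [Real.zero_rpow hβ.ne'] at h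
  exact h.mono_left nhdsWithin_le_nhds

theorem tendsto_kinetic_summands (s t γ : ℝ) (hs : 0 ≤ s) (hγ : 1 / 2 < γ) {lam nu : ℝ → ℂ}
    {q : ℂ} (hq : q ^ 2 = s + I * t) (hqre : 0 < q.re)
    (hroot : ∀ ε : ℝ, 0 < ε →
      (lam ε ^ 2 + ((ε ^ γ : ℝ) : ℂ) * lam ε - ((ε : ℂ) * s + I * ε * t + 1) = 0 ∧
        (lam ε).re < 0) ∧
      (nu ε ^ 2 - ((ε ^ γ : ℝ) : ℂ) * nu ε - ((ε : ℂ) * s + I * ε * t) = 0 ∧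
        0 < (nu ε).re)) :
    Tendsto (fun ε => (√ε : ℂ) * numeratorTerm ((ε ^ γ : ℝ) : ℂ) (lam ε) (nu ε)) (𝓝[>] 0)
        (𝓝 q⁻¹) ∧
      Tendsto (fun ε => (1 - denominatorTerm ((ε ^ γ : ℝ) : ℂ) (lam ε) (nu ε)) / (√ε : ℂ)) (𝓝[>] 0)
        (𝓝 q) := by
  have hpos : ∀ᶠ ε in 𝓝[>] (0 : ℝ), 0 < ε := self_mem_nhdsWithin
  have hsqrt : Tendsto Real.sqrt (𝓝[>] 0) (𝓝 0) :=
    (Real.continuous_sqrt.tendsto' 0 0 Real.sqrt_zero).mono_left nhdsWithin_le_nhds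
  have ha := tendsto_rpow_nhdsGT_zero (show 0 < γ by linarith)
  have hac : Tendsto (fun ε : ℝ => ε ^ γ / √ε) (𝓝[>] 0) (𝓝 0) := by
    refine (tendsto_rpow_nhdsGT_zero (show 0 < γ - 1 / 2 by linarith)).congr' ?_
    filter_upwards [hpos] with ε hε
    rw [Real.sqrt_eq_rpow, Real.rpow_sub hε]
  have hw : Tendsto (fun ε : ℝ => ((ε : ℂ) * s + I * ε * t) / (√ε : ℂ) ^ 2) (𝓝[>] 0)
      (𝓝 (q ^ 2)) := by
    rw [hq]
    refine tendsto_const_nhds.congr' ?_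
    filter_upwards [hpos] with ε hε
    rw [← ofReal_pow, Real.sq_sqrt hε.le]
    field_simp [ofReal_ne_zero.mpr hε.ne']
  obtain ⟨hlam, hnu, hnuc⟩ := tendsto_roots hqre (hpos.mono fun ε => Real.sqrt_pos.mpr) hsqrt
    ha hac hw (hpos.mono fun ε hε => by simpa using mul_nonneg hε.le hs)
    (hpos.mono fun ε hε => (hroot ε hε).1) (hpos.mono fun ε hε => (hroot ε hε).2)
  have ha' : Tendsto (fun ε : ℝ => ((ε ^ γ : ℝ) : ℂ)) (𝓝[>] 0) (𝓝 0) := by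
    simpa using ha.ofReal
  refine ⟨tendsto_mul_numeratorTerm ha' hlam hnu hnuc (fun h => hqre.ne' (by simp [h])), ?_⟩
  exact tendsto_one_sub_denominatorTerm_div ha' (by simpa using hac.ofReal) hlam hnu hnuc
    (hpos.mono fun ε hε => ⟨(hroot ε hε).1.1, (hroot ε hε).2.1⟩)

/-- Ballistic limit of the one-dimensional rescaled kinetic model (`γ > 1/2`, `μ = 0`).
For `v ∈ {−1, 1}`, let `λ_ε(v)` (resp. `ν_ε(v)`) be the unique root with negative
(resp. positive) real part of `z² + ε^γ z − (ε^{1+μ}s + iεξv + 1) = 0`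
(resp. `z² − ε^γ z − (ε^{1+μ}s + iεξv) = 0`).  With
`N(ε) = (1/2)Σ_v (1/(−λν))(1 + 2ε^γ/(ν − λ − 2ε^γ))` and
`D(ε) = 1 − (1/2)Σ_v 1/(−λ(ν − λ − 2ε^γ))`, one has `D(ε) ≠ 0` for small `ε > 0`
and `ε N(ε)/D(ε) → 1/√(s² + ξ²)` as `ε → 0⁺`. -/
theorem stmt16 (s ξ γ μ : ℝ) (hs : 0 < s) (hγ : 1 / 2 < γ) (hμ : μ = 0)
    (lam nu : ℝ → ℝ → ℂ)
    (hroot : ∀ ε : ℝ, 0 < ε → ∀ v : ℝ, v = 1 ∨ v = -1 →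
      (lam ε v ^ 2 + ((ε ^ γ : ℝ) : ℂ) * lam ε v
          - (((ε ^ (1 + μ) : ℝ) : ℂ) * (s : ℂ) + Complex.I * (ε : ℂ) * ((ξ * v : ℝ) : ℂ) + 1) = 0 ∧
        (lam ε v).re < 0) ∧
      (nu ε v ^ 2 - ((ε ^ γ : ℝ) : ℂ) * nu ε v
          - (((ε ^ (1 + μ) : ℝ) : ℂ) * (s : ℂ) + Complex.I * (ε : ℂ) * ((ξ * v : ℝ) : ℂ)) = 0 ∧
        0 < (nu ε v).re)) :
    let N : ℝ → ℂ := fun ε => (1 / 2) *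
      ((-lam ε 1 * nu ε 1)⁻¹ *
          (1 + 2 * ((ε ^ γ : ℝ) : ℂ) / (nu ε 1 - lam ε 1 - 2 * ((ε ^ γ : ℝ) : ℂ))) +
        (-lam ε (-1) * nu ε (-1))⁻¹ *
          (1 + 2 * ((ε ^ γ : ℝ) : ℂ) / (nu ε (-1) - lam ε (-1) - 2 * ((ε ^ γ : ℝ) : ℂ))))
    let D : ℝ → ℂ := fun ε => 1 - (1 / 2) *
      ((-lam ε 1 * (nu ε 1 - lam ε 1 - 2 * ((ε ^ γ : ℝ) : ℂ)))⁻¹ +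
        (-lam ε (-1) * (nu ε (-1) - lam ε (-1) - 2 * ((ε ^ γ : ℝ) : ℂ)))⁻¹)
    (∀ᶠ ε in nhdsWithin 0 (Set.Ioi 0), D ε ≠ 0) ∧
      Tendsto (fun ε : ℝ => (ε : ℂ) * N ε / D ε) (nhdsWithin 0 (Set.Ioi 0))
        (nhds (((1 / Real.sqrt (s ^ 2 + ξ ^ 2) : ℝ)) : ℂ)) := by
  intro N D
  simp only [hμ, add_zero, Real.rpow_one] at hroot
  obtain ⟨q, hq, hqre⟩ := exists_sq_eq_and_re_pos (p := s + I * ((ξ * 1 : ℝ) : ℂ)) (by simpa)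
  have hq' : conj q ^ 2 = s + I * ((ξ * -1 : ℝ) : ℂ) := by
    rw [← map_pow, hq, map_add, map_mul, conj_ofReal, conj_ofReal, conj_I]
    push_cast
    ring
  obtain ⟨hN₁, hD₁⟩ := tendsto_kinetic_summands s (ξ * 1) γ hs.le hγ hq hqre
    fun ε hε => hroot ε hε 1 (Or.inl rfl)
  obtain ⟨hN₂, hD₂⟩ := tendsto_kinetic_summands s (ξ * -1) γ hs.le hγ hq' (by simpa using hqre)
    fun ε hε => hroot ε hε (-1) (Or.inr rfl)
  have hN : Tendsto (fun ε => (√ε : ℂ) * N ε) (𝓝[>] 0) (𝓝 ((q⁻¹ + (conj q)⁻¹) / 2)) :=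
    ((hN₁.add hN₂).div_const 2).congr fun ε => by simp only [N, numeratorTerm]; ring
  have hD : Tendsto (fun ε => D ε / √ε) (𝓝[>] 0) (𝓝 ((q + conj q) / 2)) :=
    ((hD₁.add hD₂).div_const 2).congr fun ε => by simp only [D, denominatorTerm]; ring
  have hre : (q + conj q) / 2 ≠ 0 := by
    rw [add_conj]
    exact div_ne_zero (by exact_mod_cast (mul_pos two_pos hqre).ne') two_ne_zero
  refine ⟨(hD.eventually_ne hre).mono fun ε h hD0 => h (by rw [hD0, zero_div]), ?_⟩
  have hval : (q⁻¹ + (conj q)⁻¹) / 2 / ((q + conj q) / 2) = ((1 / √(s ^ 2 + ξ ^ 2) : ℝ) : ℂ) := by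
    rw [div_div_div_cancel_right₀ two_ne_zero, inv_add_inv_conj_div_add_conj hqre, hq,
      mul_comm I, mul_one, norm_add_mul_I, one_div]
  refine (hval ▸ hN.div hD hre).congr' ?_
  filter_upwards [self_mem_nhdsWithin] with ε (hε : 0 < ε)
  rw [Pi.div_apply, div_div_eq_mul_div, mul_right_comm, ← sq, ← ofReal_pow, Real.sq_sqrt hε.le]
end

section
/- Fix s > 0, ξ ∈ ℝ, γ = 0 and μ = 1. Define N(ε) = (1/2) Σ_{v ∈ {−1,1}} [1/(−λ_ε(v)(ν_ε(v) − λ_ε(v) − 2)) + 1/(ν_ε(v)(ν_ε(v) − λ_ε(v) − 2))] and D(ε) = 1 − (1/2) Σ_{v ∈ {−1,1}} 1/(−λ_ε(v)(ν_ε(v) − λ_ε(v) − 2)). Then for all sufficiently small ε > 0 one has D(ε) ≠ 0, and ε² · N(ε)/D(ε) → 1/(s + ((15 + 7√5)/10) ξ²) as ε → 0⁺. -/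
/-!
With `w = ε²s + iεξv`, the two roots are `λ = (-1 - √(5 + 4w))/2` and `ν = (1 + √(1 + 4w))/2`
(principal square roots), and the quadratic relations `λ² + λ = w + 1`, `ν² - ν = w` give
`1/(-λ(ν - λ - 2)) = 1 - w g(w)` with `g = (ν - λ)/(-λν(ν - λ - 2))`, holomorphic at `0`.
Hence `D(ε) = (w₊ g(w₊) + w₋ g(w₋))/2` with `w± = ε(εs ± iξ)`; expanding `g` to first order,
`D(ε)/ε² → s g(0) - ξ² g'(0)` while `N(ε) → g(0)`. At `w = 0` one has `λ = -(1 + √5)/2`,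
`ν = 1`, so `g(0) = (3 + √5)/2` and `g'(0) = -((15 + 7√5)/10) g(0)`.
-/

open Filter Complex Topology

namespace Complex

lemma sq_sqrt (z : ℂ) : sqrt z ^ 2 = z := by
  rw [sqrt]; exact_mod_cast cpow_nat_inv_pow z two_ne_zero

lemma re_sqrt_nonneg (z : ℂ) : 0 ≤ (sqrt z).re := by
  rw [sqrt, cpow_inv_two_re]
  exact Real.sqrt_nonneg _

lemma le_re_sqrt {z : ℂ} {t : ℝ} (h : t ^ 2 ≤ z.re) : t ≤ (sqrt z).re := by
  have hre : (sqrt z).re ^ 2 - (sqrt z).im ^ 2 = z.re := by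
    simpa [sq] using congrArg re (sq_sqrt z)
  nlinarith [re_sqrt_nonneg z, sq_nonneg (sqrt z).im]

lemma sqrt_ofReal {x : ℝ} (hx : 0 ≤ x) : sqrt x = (√x : ℝ) := by
  rw [sqrt_of_nonneg (by exact_mod_cast hx), ofReal_re]

end Complex

namespace KineticDiffusion

noncomputable def lamRoot (w : ℂ) : ℂ := (-1 - sqrt (5 + 4 * w)) / 2

noncomputable def nuRoot (w : ℂ) : ℂ := (1 + sqrt (1 + 4 * w)) / 2

lemma lamRoot_sq_add (w : ℂ) : lamRoot w ^ 2 + lamRoot w = w + 1 := by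
  unfold lamRoot
  linear_combination (1 / 4 : ℂ) * sq_sqrt (5 + 4 * w)

lemma nuRoot_sq_sub (w : ℂ) : nuRoot w ^ 2 - nuRoot w = w := by
  unfold nuRoot
  linear_combination (1 / 4 : ℂ) * sq_sqrt (1 + 4 * w)

lemma lamRoot_re_le {w : ℂ} (hw : 0 ≤ w.re) : (lamRoot w).re ≤ -3 / 2 := by
  have := le_re_sqrt (z := 5 + 4 * w) (t := 2) (by
    simp only [add_re, re_ofNat, mul_re, im_ofNat, zero_mul, sub_zero]; linarith)
  simp only [lamRoot, div_ofNat_re, sub_re, neg_re, one_re]; linarith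

lemma one_le_nuRoot_re {w : ℂ} (hw : 0 ≤ w.re) : 1 ≤ (nuRoot w).re := by
  have := le_re_sqrt (z := 1 + 4 * w) (t := 1) (by
    simp only [add_re, one_re, mul_re, re_ofNat, im_ofNat, zero_mul, sub_zero]; linarith)
  simp only [nuRoot, div_ofNat_re, add_re, one_re]; linarith

lemma eq_lamRoot {w x : ℂ} (hw : -1 ≤ w.re) (hx : x ^ 2 + x - (w + 1) = 0) (hre : x.re < 0) :
    x = lamRoot w := by
  have hdisc : discrim 1 1 (-(w + 1)) = sqrt (5 + 4 * w) * sqrt (5 + 4 * w) := by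
    rw [discrim, ← sq, sq_sqrt]; ring
  rcases (quadratic_eq_zero_iff one_ne_zero hdisc x).mp (by linear_combination hx) with h | h
  · have := le_re_sqrt (z := 5 + 4 * w) (t := 1) (by
      simp only [add_re, re_ofNat, mul_re, im_ofNat, zero_mul, sub_zero]; linarith)
    rw [h] at hre
    simp only [mul_one, div_ofNat_re, add_re, neg_re, one_re] at hre
    linarith
  · rw [h, lamRoot, mul_one]

lemma eq_nuRoot {w y : ℂ} (hw : 0 ≤ w.re) (hy : y ^ 2 - y - w = 0) (hre : 0 < y.re) :
    y = nuRoot w := by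
  have hdisc : discrim 1 (-1) (-w) = sqrt (1 + 4 * w) * sqrt (1 + 4 * w) := by
    rw [discrim, ← sq, sq_sqrt]; ring
  rcases (quadratic_eq_zero_iff one_ne_zero hdisc y).mp (by linear_combination hy) with h | h
  · rw [h, nuRoot]; ring
  · have := le_re_sqrt (z := 1 + 4 * w) (t := 1) (by
      simp only [add_re, one_re, mul_re, re_ofNat, im_ofNat, zero_mul, sub_zero]; linarith)
    rw [h] at hre
    simp only [neg_neg, mul_one, div_ofNat_re, sub_re, one_re] at hre
    linarith

lemma two_mul_add_mul_eq_one_of_hasDerivAt {f : ℂ → ℂ} {f' b c z : ℂ}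
    (h : ∀ w, f w ^ 2 + b * f w = w + c) (hf : HasDerivAt f f' z) : (2 * f z + b) * f' = 1 := by
  have hsq : HasDerivAt (fun w => f w ^ 2 + b * f w) (2 * f z * f' + b * f') z := by
    simpa using (hf.fun_pow 2).fun_add (hf.const_mul b)
  have hid : HasDerivAt (fun w => f w ^ 2 + b * f w) 1 z := by
    simpa [h] using (hasDerivAt_id z).add_const c
  linear_combination hsq.unique hid

lemma lamRoot_zero : lamRoot 0 = -(1 + (√5 : ℝ)) / 2 := by
  rw [lamRoot, mul_zero, add_zero, show (5 : ℂ) = ((5 : ℝ) : ℂ) by norm_num, sqrt_ofReal (by norm_num)]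
  ring

lemma nuRoot_zero : nuRoot 0 = 1 := by
  norm_num [nuRoot]

lemma differentiableAt_lamRoot_zero : DifferentiableAt ℂ lamRoot 0 := by
  unfold lamRoot
  have : DifferentiableAt ℂ sqrt (5 + 4 * 0) := differentiableAt_sqrt (by norm_num [slitPlane])
  fun_prop

lemma hasDerivAt_nuRoot_zero : HasDerivAt nuRoot 1 0 := by
  have hd : DifferentiableAt ℂ nuRoot 0 := by
    unfold nuRoot
    have : DifferentiableAt ℂ sqrt (1 + 4 * 0) := differentiableAt_sqrt (by norm_num [slitPlane])
    fun_prop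
  have := two_mul_add_mul_eq_one_of_hasDerivAt (b := -1) (c := 0)
    (fun w => by linear_combination nuRoot_sq_sub w) hd.hasDerivAt
  refine hd.hasDerivAt.congr_deriv ?_
  rw [nuRoot_zero] at this
  linear_combination this

noncomputable def lamTerm (w : ℂ) : ℂ := (-lamRoot w * (nuRoot w - lamRoot w - 2))⁻¹

noncomputable def nuTerm (w : ℂ) : ℂ := (nuRoot w * (nuRoot w - lamRoot w - 2))⁻¹

noncomputable def lamTermSlope (w : ℂ) : ℂ :=
  (nuRoot w - lamRoot w) / (-lamRoot w * nuRoot w * (nuRoot w - lamRoot w - 2))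

lemma one_sub_lamTerm {w : ℂ} (hw : 0 ≤ w.re) : 1 - lamTerm w = w * lamTermSlope w := by
  have hlam := lamRoot_re_le hw
  have hnu := one_le_nuRoot_re hw
  have h1 : lamRoot w ≠ 0 := fun h => by rw [h] at hlam; norm_num at hlam
  have h2 : nuRoot w ≠ 0 := fun h => by rw [h] at hnu; norm_num at hnu
  have h3 : nuRoot w - lamRoot w - 2 ≠ 0 := fun h => by
    have := congrArg re h
    simp only [sub_re, re_ofNat, zero_re] at this
    linarith
  rw [lamTerm, lamTermSlope]
  field_simp
  linear_combination lamRoot w * nuRoot_sq_sub w - nuRoot w * lamRoot_sq_add w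

lemma lamRoot_zero_mul : -lamRoot 0 * nuRoot 0 * (nuRoot 0 - lamRoot 0 - 2) = 1 := by
  rw [nuRoot_zero]; linear_combination lamRoot_sq_add 0

lemma lamTermSlope_zero : lamTermSlope 0 = 1 - lamRoot 0 := by
  rw [lamTermSlope, lamRoot_zero_mul, div_one, nuRoot_zero]

lemma nuTerm_zero : nuTerm 0 = lamTermSlope 0 - 1 := by
  rw [nuTerm, lamTermSlope_zero, sub_sub_cancel_left, inv_eq_iff_eq_inv, eq_comm,
    inv_eq_of_mul_eq_one_left]
  linear_combination lamRoot_zero_mul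

lemma lamTermSlope_zero_ne_zero : lamTermSlope 0 ≠ 0 := fun h => by
  have hlam := lamRoot_re_le (w := 0) le_rfl
  have := congrArg re h
  simp only [lamTermSlope_zero, sub_re, one_re, zero_re] at this
  linarith

lemma hasDerivAt_lamTermSlope_zero :
    HasDerivAt lamTermSlope (-(((15 + 7 * √5) / 10 : ℝ) : ℂ) * lamTermSlope 0) 0 := by
  have hlam := differentiableAt_lamRoot_zero.hasDerivAt
  have hlam' := two_mul_add_mul_eq_one_of_hasDerivAt (b := 1) (c := 1)
    (fun w => by linear_combination lamRoot_sq_add w) hlam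
  have hnu := hasDerivAt_nuRoot_zero
  have hquot := (hnu.fun_sub hlam).fun_div
    ((hlam.fun_neg.fun_mul hnu).fun_mul ((hnu.fun_sub hlam).sub_const 2))
    (by rw [lamRoot_zero_mul]; exact one_ne_zero)
  refine hquot.congr_deriv ?_
  rw [lamRoot_zero_mul, lamTermSlope_zero, nuRoot_zero]
  push_cast
  -- reduce modulo `λ₀² + λ₀ = 1`, `(2λ₀ + 1) λ₀' = 1` and `λ₀ = -(1 + √5)/2`
  linear_combination (3 * lamRoot 0 - 6) / 5 * hlam'
    + (4 / 5 * deriv lamRoot 0 + lamRoot 0 - 3 / 5) * lamRoot_sq_add 0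
    + 7 * (1 - lamRoot 0) / 5 * lamRoot_zero

lemma continuousAt_nuTerm_zero : ContinuousAt nuTerm 0 := by
  have hlam := differentiableAt_lamRoot_zero.continuousAt
  have hnu := hasDerivAt_nuRoot_zero.continuousAt
  have hne : nuRoot 0 * (nuRoot 0 - lamRoot 0 - 2) ≠ 0 := fun h => by
    simpa [mul_assoc, h] using lamRoot_zero_mul
  exact (hnu.mul ((hnu.sub hlam).sub continuousAt_const)).inv₀ hne

noncomputable def wEps (s ξ ε v : ℝ) : ℂ := ((ε ^ 2 : ℝ) : ℂ) * s + I * ε * ((ξ * v : ℝ) : ℂ)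

lemma continuous_wEps (s ξ v : ℝ) : Continuous fun ε => wEps s ξ ε v := by
  unfold wEps; fun_prop

lemma wEps_zero (s ξ v : ℝ) : wEps s ξ 0 v = 0 := by
  simp [wEps]

lemma wEps_re (s ξ ε v : ℝ) : (wEps s ξ ε v).re = ε ^ 2 * s := by
  simp [wEps, -ofReal_pow]

lemma tendsto_wEps_zero (s ξ v : ℝ) : Tendsto (fun ε => wEps s ξ ε v) (𝓝 0) (𝓝 0) :=
  (continuous_wEps s ξ v).tendsto' 0 0 (wEps_zero s ξ v)

lemma tendsto_wEps_mul_div_sq {g : ℂ → ℂ} (hg : DifferentiableAt ℂ g 0) (s ξ : ℝ) :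
    Tendsto (fun ε : ℝ => (wEps s ξ ε 1 * g (wEps s ξ ε 1)
        + wEps s ξ ε (-1) * g (wEps s ξ ε (-1))) / (2 * (ε : ℂ) ^ 2))
      (𝓝[≠] 0) (𝓝 (s * g 0 - ξ ^ 2 * deriv g 0)) := by
  have hT (v : ℝ) : ContinuousAt (fun ε => dslope g 0 (wEps s ξ ε v)) 0 :=
    ContinuousAt.comp_of_eq (continuousAt_dslope_same.mpr hg)
      (continuous_wEps s ξ v).continuousAt (wEps_zero s ξ v)
  have hg_eq (w : ℂ) : g w = g 0 + w * dslope g 0 w := by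
    have := sub_smul_dslope g 0 w
    rw [sub_zero, smul_eq_mul] at this
    linear_combination -this
  have hF : ContinuousAt (fun ε : ℝ => s * g 0 + ((ε * s + I * ξ) ^ 2 * dslope g 0 (wEps s ξ ε 1)
      + (ε * s - I * ξ) ^ 2 * dslope g 0 (wEps s ξ ε (-1))) / 2) 0 := by
    have := hT 1; have := hT (-1); fun_prop
  have hF0 : s * g 0 - ξ ^ 2 * deriv g 0
      = s * g 0 + ((0 * s + I * ξ) ^ 2 * dslope g 0 (wEps s ξ 0 1)
        + (0 * s - I * ξ) ^ 2 * dslope g 0 (wEps s ξ 0 (-1))) / 2 := by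
    rw [wEps_zero, wEps_zero, dslope_same]
    linear_combination (-ξ ^ 2 * deriv g 0 : ℂ) * I_sq
  rw [hF0]
  refine (hF.tendsto.mono_left nhdsWithin_le_nhds).congr' ?_
  filter_upwards [self_mem_nhdsWithin] with ε (hε : ε ≠ 0)
  have hε' : (ε : ℂ) ≠ 0 := ofReal_ne_zero.mpr hε
  -- `w± = ε (εs ± iξ)` and `w₊ + w₋ = 2ε²s`
  rw [hg_eq (wEps s ξ ε 1), hg_eq (wEps s ξ ε (-1)), wEps, wEps]
  push_cast
  field_simp
  ring

noncomputable def numer (s ξ ε : ℝ) : ℂ :=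
  (1 / 2) * ((lamTerm (wEps s ξ ε 1) + nuTerm (wEps s ξ ε 1))
    + (lamTerm (wEps s ξ ε (-1)) + nuTerm (wEps s ξ ε (-1))))

noncomputable def denom (s ξ ε : ℝ) : ℂ :=
  1 - (1 / 2) * (lamTerm (wEps s ξ ε 1) + lamTerm (wEps s ξ ε (-1)))

lemma tendsto_lamTerm_wEps {s : ℝ} (hs : 0 ≤ s) (ξ v : ℝ) :
    Tendsto (fun ε => lamTerm (wEps s ξ ε v)) (𝓝[>] 0) (𝓝 1) := by
  have hw := tendsto_wEps_zero s ξ v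
  have hslope := hasDerivAt_lamTermSlope_zero.continuousAt.tendsto.comp hw
  have := (tendsto_const_nhds (x := (1 : ℂ))).sub (hw.mul hslope)
  rw [zero_mul, sub_zero] at this
  refine (this.mono_left nhdsWithin_le_nhds).congr' ?_
  filter_upwards with ε
  rw [Function.comp_apply, ← one_sub_lamTerm (by rw [wEps_re]; positivity), sub_sub_cancel]

lemma tendsto_numer {s : ℝ} (hs : 0 ≤ s) (ξ : ℝ) :
    Tendsto (numer s ξ) (𝓝[>] 0) (𝓝 (lamTermSlope 0)) := by
  have hnu (v : ℝ) : Tendsto (fun ε => nuTerm (wEps s ξ ε v)) (𝓝[>] 0) (𝓝 (nuTerm 0)) :=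
    (continuousAt_nuTerm_zero.tendsto.comp (tendsto_wEps_zero s ξ v)).mono_left
      nhdsWithin_le_nhds
  have := (((tendsto_lamTerm_wEps hs ξ 1).add (hnu 1)).add
    ((tendsto_lamTerm_wEps hs ξ (-1)).add (hnu (-1)))).const_mul (1 / 2 : ℂ)
  rwa [nuTerm_zero, show (1 / 2 : ℂ) * (1 + (lamTermSlope 0 - 1) + (1 + (lamTermSlope 0 - 1)))
    = lamTermSlope 0 by ring] at this

lemma tendsto_denom_div_sq {s : ℝ} (hs : 0 ≤ s) (ξ : ℝ) :
    Tendsto (fun ε => denom s ξ ε / (ε : ℂ) ^ 2) (𝓝[>] 0)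
      (𝓝 (lamTermSlope 0 * (s + (((15 + 7 * √5) / 10 : ℝ) : ℂ) * ξ ^ 2))) := by
  have := (tendsto_wEps_mul_div_sq hasDerivAt_lamTermSlope_zero.differentiableAt s ξ).mono_left
    (nhdsGT_le_nhdsNE 0)
  rw [hasDerivAt_lamTermSlope_zero.deriv] at this
  convert this using 2 with ε
  · have hre (v : ℝ) : 0 ≤ (wEps s ξ ε v).re := by rw [wEps_re]; positivity
    rw [denom, ← one_sub_lamTerm (hre 1), ← one_sub_lamTerm (hre (-1))]
    ring
  · ring

end KineticDiffusion

lemma eventually_ne_zero_and_tendsto_sq_mul_div {l : Filter ℝ} {N D : ℝ → ℂ} {a b : ℂ}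
    (hl : ∀ᶠ ε in l, ε ≠ 0) (hN : Tendsto N l (𝓝 a))
    (hD : Tendsto (fun ε => D ε / (ε : ℂ) ^ 2) l (𝓝 b)) (hb : b ≠ 0) :
    (∀ᶠ ε in l, D ε ≠ 0) ∧ Tendsto (fun ε : ℝ => (ε : ℂ) ^ 2 * N ε / D ε) l (𝓝 (a / b)) := by
  have hDb : ∀ᶠ ε in l, D ε / (ε : ℂ) ^ 2 ≠ 0 := hD.eventually_ne hb
  refine ⟨hDb.mono fun ε h hD0 => h (by rw [hD0, zero_div]), (hN.div hD hb).congr' ?_⟩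
  filter_upwards [hl] with ε hε
  have : (ε : ℂ) ^ 2 ≠ 0 := pow_ne_zero 2 (ofReal_ne_zero.mpr hε)
  rw [Pi.div_apply]
  field_simp

open KineticDiffusion in
/-- Diffusion limit of the one-dimensional rescaled kinetic model at `γ = 0`, `μ = 1`.
For `v ∈ {−1, 1}`, let `λ_ε(v)` (resp. `ν_ε(v)`) be the unique root with negative
(resp. positive) real part of `z² + ε^γ z − (ε^{1+μ}s + iεξv + 1) = 0`
(resp. `z² − ε^γ z − (ε^{1+μ}s + iεξv) = 0`).  With
`N(ε) = (1/2)Σ_v [1/(−λ(ν − λ − 2)) + 1/(ν(ν − λ − 2))]` and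
`D(ε) = 1 − (1/2)Σ_v 1/(−λ(ν − λ − 2))`, one has `D(ε) ≠ 0` for small `ε > 0` and
`ε² N(ε)/D(ε) → 1/(s + ((15 + 7√5)/10) ξ²)` as `ε → 0⁺`. -/
theorem stmt17 (s ξ γ μ : ℝ) (hs : 0 < s) (hγ : γ = 0) (hμ : μ = 1)
    (lam nu : ℝ → ℝ → ℂ)
    (hroot : ∀ ε : ℝ, 0 < ε → ∀ v : ℝ, v = 1 ∨ v = -1 →
      (lam ε v ^ 2 + ((ε ^ γ : ℝ) : ℂ) * lam ε v
          - (((ε ^ (1 + μ) : ℝ) : ℂ) * (s : ℂ) + Complex.I * (ε : ℂ) * ((ξ * v : ℝ) : ℂ) + 1) = 0 ∧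
        (lam ε v).re < 0) ∧
      (nu ε v ^ 2 - ((ε ^ γ : ℝ) : ℂ) * nu ε v
          - (((ε ^ (1 + μ) : ℝ) : ℂ) * (s : ℂ) + Complex.I * (ε : ℂ) * ((ξ * v : ℝ) : ℂ)) = 0 ∧
        0 < (nu ε v).re)) :
    let N : ℝ → ℂ := fun ε => (1 / 2) *
      (((-lam ε 1 * (nu ε 1 - lam ε 1 - 2))⁻¹ + (nu ε 1 * (nu ε 1 - lam ε 1 - 2))⁻¹) +
        ((-lam ε (-1) * (nu ε (-1) - lam ε (-1) - 2))⁻¹ +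
          (nu ε (-1) * (nu ε (-1) - lam ε (-1) - 2))⁻¹))
    let D : ℝ → ℂ := fun ε => 1 - (1 / 2) *
      ((-lam ε 1 * (nu ε 1 - lam ε 1 - 2))⁻¹ + (-lam ε (-1) * (nu ε (-1) - lam ε (-1) - 2))⁻¹)
    (∀ᶠ ε in nhdsWithin 0 (Set.Ioi 0), D ε ≠ 0) ∧
      Tendsto (fun ε : ℝ => (ε : ℂ) ^ 2 * N ε / D ε) (nhdsWithin 0 (Set.Ioi 0))
        (nhds (((1 / (s + (15 + 7 * Real.sqrt 5) / 10 * ξ ^ 2) : ℝ)) : ℂ)) := by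
  subst hγ hμ
  intro N D
  simp only [Real.rpow_zero, ofReal_one, one_mul, one_add_one_eq_two, Real.rpow_two] at hroot
  have hre (ε v : ℝ) : 0 ≤ (wEps s ξ ε v).re := by rw [wEps_re]; positivity
  have hroots : ∀ ε > 0, ∀ v : ℝ, v = 1 ∨ v = -1 →
      lam ε v = lamRoot (wEps s ξ ε v) ∧ nu ε v = nuRoot (wEps s ξ ε v) := fun ε hε v hv =>
    have h := hroot ε hε v hv
    ⟨eq_lamRoot (by linarith [hre ε v]) h.1.1 h.1.2, eq_nuRoot (hre ε v) h.2.1 h.2.2⟩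
  have hND : ∀ᶠ ε in 𝓝[>] 0, numer s ξ ε = N ε ∧ denom s ξ ε = D ε := by
    filter_upwards [self_mem_nhdsWithin] with ε hε
    obtain ⟨hlam₁, hnu₁⟩ := hroots ε hε 1 (.inl rfl)
    obtain ⟨hlam₂, hnu₂⟩ := hroots ε hε (-1) (.inr rfl)
    simp only [N, D, numer, denom, lamTerm, nuTerm, hlam₁, hnu₁, hlam₂, hnu₂, and_self]
  have hC : (s + (((15 + 7 * √5) / 10 : ℝ) : ℂ) * ξ ^ 2) ≠ 0 := by
    exact_mod_cast (show 0 < s + (15 + 7 * √5) / 10 * ξ ^ 2 by positivity).ne'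
  have hε : ∀ᶠ ε in 𝓝[>] (0 : ℝ), ε ≠ 0 := eventually_mem_nhdsWithin.mono fun ε hε => ne_of_gt hε
  convert eventually_ne_zero_and_tendsto_sq_mul_div (D := D) hε
    ((tendsto_numer hs.le ξ).congr' (hND.mono fun ε h => h.1))
    ((tendsto_denom_div_sq hs.le ξ).congr' (hND.mono fun ε h => by rw [h.2]))
    (mul_ne_zero lamTermSlope_zero_ne_zero hC) using 3
  rw [div_mul_cancel_left₀ lamTermSlope_zero_ne_zero]
  push_cast
  ring
end
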